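/- arXiv:2404.04369 — 11 statements merged into one kernel-verified Lean document; each statement's English description precedes it below -/
import Mathlib

section
/- Let H be a finite simple graph and let C be a minimal clique separator in H, i.e., C is a clique separator of H and no proper subset of C is a clique separator of H. Let S_1, S_2, …, S_k be the vertex sets of the connected components of the induced subgraph H[V(H) ∖ C]. Then D(H) = ⋃_{i∈[k]} D(H[S_i ∪ C]). -/
/-- A set `C` of vertices is a *clique separator* of the graph `H` if `C` is a proper
subset of the vertex set, `H[C]` is a clique, and the induced subgraph on the
complement of `C` is disconnected. -/
def IsCliqueSeparator {V : Type*} (H : SimpleGraph V) (C : Set V) : Prop :=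
  C ≠ Set.univ ∧ H.IsClique C ∧ ¬ (H.induce Cᶜ).Connected

/-- `H` has no clique separator. -/
def HasNoCliqueSeparator {V : Type*} (H : SimpleGraph V) : Prop :=
  ∀ C, ¬ IsCliqueSeparator H C

/-- The clique-separator decomposition `D(H[W])` of the induced subgraph of `H` on `W`,
represented by vertex subsets of the ambient graph: the collection of all sets
`A ⊆ W` such that `H[A]` has no clique separator and `A` is inclusion-wise maximal
among subsets of `W` with this property.  `D(H)` itself is `DSetIn H Set.univ`. -/
def DSetIn {V : Type*} (H : SimpleGraph V) (W : Set V) : Set (Set V) :=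
  {A | A ⊆ W ∧ HasNoCliqueSeparator (H.induce A) ∧
       ∀ B : Set V, A ⊆ B → B ⊆ W → HasNoCliqueSeparator (H.induce B) → B = A}

open SimpleGraph

namespace CliqueSepAux

variable {V : Type*}

/-- Inclusion homomorphism between induced subgraphs. -/
def inclHom (H : SimpleGraph V) {A B : Set V} (hAB : A ⊆ B) : H.induce A →g H.induce B where
  toFun x := ⟨x.1, hAB x.2⟩
  map_rel' := fun h => h

lemma adj_induce {H : SimpleGraph V} {A : Set V} {u v : ↥A}
    (h : H.Adj ↑u ↑v) : (H.induce A).Adj u v := h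

lemma adj_of_induce {H : SimpleGraph V} {A : Set V} {u v : ↥A}
    (h : (H.induce A).Adj u v) : H.Adj ↑u ↑v := h

lemma reach_mono (H : SimpleGraph V) {A B : Set V} (hAB : A ⊆ B) {u v : ↥A}
    (h : (H.induce A).Reachable u v) :
    (H.induce B).Reachable ⟨u.1, hAB u.2⟩ ⟨v.1, hAB v.2⟩ :=
  h.map (inclHom H hAB)

/-- The canonical iso between a doubly induced subgraph and the induced subgraph on
the image. -/
def induceInduceIso (H : SimpleGraph V) (A : Set V) (B : Set ↥A) :
    (H.induce A).induce B ≃g H.induce (Subtype.val '' B) where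
  toFun x := ⟨x.1.1, ⟨x.1, x.2, rfl⟩⟩
  invFun y := ⟨⟨y.1, by obtain ⟨x, _, he⟩ := y.2; exact he ▸ x.2⟩,
    by obtain ⟨x, hx, he⟩ := y.2
       have : x = ⟨y.1, by exact he ▸ x.2⟩ := Subtype.ext he
       exact this ▸ hx⟩
  left_inv x := by apply Subtype.ext; apply Subtype.ext; rfl
  right_inv y := by apply Subtype.ext; rfl
  map_rel_iff' := Iff.rfl

lemma isClique_induce_iff (H : SimpleGraph V) {A : Set V} {B : Set ↥A} :
    (H.induce A).IsClique B ↔ H.IsClique (Subtype.val '' B) := by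
  constructor
  · rintro h x ⟨x', hx', rfl⟩ y ⟨y', hy', rfl⟩ hxy
    exact h hx' hy' (fun e => hxy (by rw [e]))
  · intro h x hx y hy hxy
    exact h ⟨x, hx, rfl⟩ ⟨y, hy, rfl⟩ (fun e => hxy (Subtype.val_injective e))

/-- `V`-level reformulation of "the induced subgraph on `A` has no clique separator". -/
def NCS (H : SimpleGraph V) (A : Set V) : Prop :=
  ∀ D : Set V, D ⊆ A → D ≠ A → H.IsClique D → (H.induce (A \ D)).Connected

lemma ncs_iff (H : SimpleGraph V) (A : Set V) :
    HasNoCliqueSeparator (H.induce A) ↔ NCS H A := by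
  constructor
  · intro h D hDA hDne hDcl
    have hnsep := h {x : ↥A | x.1 ∈ D}
    rw [IsCliqueSeparator] at hnsep
    push_neg at hnsep
    have h1 : {x : ↥A | x.1 ∈ D} ≠ Set.univ := by
      obtain ⟨a, haA, haD⟩ : ∃ a, a ∈ A ∧ a ∉ D := by
        by_contra hcon
        push_neg at hcon
        exact hDne (Set.Subset.antisymm hDA (fun a ha => hcon a ha))
      intro he
      have : (⟨a, haA⟩ : ↥A) ∈ {x : ↥A | x.1 ∈ D} := he ▸ Set.mem_univ _
      exact haD this
    have h2 : (H.induce A).IsClique {x : ↥A | x.1 ∈ D} := by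
      rw [isClique_induce_iff]
      exact hDcl.subset (by rintro x ⟨x', hx', rfl⟩; exact hx')
    have h3 := hnsep h1 h2
    have himg : Subtype.val '' ({x : ↥A | x.1 ∈ D}ᶜ) = A \ D := by
      ext v
      constructor
      · rintro ⟨x, hx, rfl⟩; exact ⟨x.2, hx⟩
      · rintro ⟨hvA, hvD⟩; exact ⟨⟨v, hvA⟩, hvD, rfl⟩
    rw [← himg]
    exact ((induceInduceIso H A _).connected_iff).mp h3
  · intro h D' hsep
    obtain ⟨h1, h2, h3⟩ := hsep
    apply h3
    have himg : Subtype.val '' (D'ᶜ) = A \ (Subtype.val '' D') := by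
      ext v
      constructor
      · rintro ⟨x, hx, rfl⟩
        refine ⟨x.2, ?_⟩
        rintro ⟨y, hy, hyv⟩
        exact hx ((Subtype.ext hyv : y = x) ▸ hy)
      · rintro ⟨hvA, hvD⟩
        exact ⟨⟨v, hvA⟩, fun hc => hvD ⟨⟨v, hvA⟩, hc, rfl⟩, rfl⟩
    have hcon : (H.induce (A \ (Subtype.val '' D'))).Connected := by
      apply h
      · rintro v ⟨x, _, rfl⟩; exact x.2
      · intro he
        obtain ⟨x, hx⟩ : ∃ x : ↥A, x ∉ D' := by
          by_contra hcon
          push_neg at hcon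
          exact h1 (Set.eq_univ_of_forall hcon)
        have h4 : x.1 ∈ Subtype.val '' D' := by rw [he]; exact x.2
        obtain ⟨y, hy, hyv⟩ := h4
        exact hx ((Subtype.ext hyv : y = x) ▸ hy)
      · rw [← isClique_induce_iff]; exact h2
    rw [← himg] at hcon
    exact ((induceInduceIso H A _).connected_iff).mpr hcon

lemma clique_connected (H : SimpleGraph V) {A : Set V} (h : H.IsClique A)
    (hne : A.Nonempty) : (H.induce A).Connected := by
  rw [connected_iff]
  refine ⟨fun u v => ?_, ⟨⟨hne.choose, hne.choose_spec⟩⟩⟩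
  by_cases huv : u = v
  · exact huv ▸ Reachable.refl u
  · exact (adj_induce (h u.2 v.2 (fun e => huv (Subtype.ext e)))).reachable

lemma clique_ncs (H : SimpleGraph V) {A : Set V} (h : H.IsClique A) : NCS H A := by
  intro D hDA hDne _
  apply clique_connected H (h.subset Set.diff_subset)
  by_contra hcon
  push_neg at hcon
  rw [Set.diff_eq_empty] at hcon
  exact hDne (Set.Subset.antisymm hDA hcon)

/-- Gluing: if `R` is connected and every vertex of `T \ R` has a neighbour in `R`,
then `T` is connected. -/
lemma glue_connected (H : SimpleGraph V) {R T : Set V} (hRT : R ⊆ T)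
    (hR : (H.induce R).Connected)
    (hcov : ∀ v ∈ T \ R, ∃ r ∈ R, H.Adj v r) : (H.induce T).Connected := by
  rw [connected_iff] at hR ⊢
  obtain ⟨hRpre, ⟨r0⟩⟩ := hR
  refine ⟨?_, ⟨⟨r0.1, hRT r0.2⟩⟩⟩
  have key : ∀ u : ↥T, (H.induce T).Reachable u ⟨r0.1, hRT r0.2⟩ := by
    intro u
    by_cases hu : u.1 ∈ R
    · exact reach_mono H hRT (hRpre ⟨u.1, hu⟩ r0)
    · obtain ⟨r, hrR, hadj⟩ := hcov u.1 ⟨u.2, hu⟩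
      exact (adj_induce (A := T) (u := u) (v := ⟨r, hRT hrR⟩) hadj).reachable.trans
        (reach_mono H hRT (hRpre ⟨r, hrR⟩ r0))
  exact fun u v => (key u).trans (key v).symm

/-- Walk lemma: a walk in `H[(C\{c})ᶜ]` from a vertex in component `K` of `H[Cᶜ]` to
a vertex not in `K` yields a neighbour of `c` inside `K`. -/
lemma walk_find_adj (H : SimpleGraph V) {C : Set V} {c : V}
    {K : (H.induce Cᶜ).ConnectedComponent} :
    ∀ {u t : ↥((C \ {c})ᶜ)} (_ : (H.induce ((C \ {c})ᶜ)).Walk u t)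
      (_ : ∃ h : u.1 ∈ Cᶜ, (H.induce Cᶜ).connectedComponentMk ⟨u.1, h⟩ = K)
      (_ : ∀ h : t.1 ∈ Cᶜ, (H.induce Cᶜ).connectedComponentMk ⟨t.1, h⟩ ≠ K),
      ∃ k, (∃ h : k ∈ Cᶜ, (H.induce Cᶜ).connectedComponentMk ⟨k, h⟩ = K) ∧ H.Adj c k := by
  intro u t p
  induction p with
  | nil =>
    intro hu ht
    obtain ⟨h, hk⟩ := hu
    exact absurd hk (ht h)
  | @cons a b t hab p ih =>
    intro hu ht
    obtain ⟨ha, haK⟩ := hu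
    by_cases hbc : (b : V) = c
    · refine ⟨a.1, ⟨ha, haK⟩, ?_⟩
      have h' : H.Adj a.1 b.1 := hab
      rw [hbc] at h'
      exact h'.symm
    · have hb : (b : V) ∈ Cᶜ := by
        intro hbC
        exact b.2 ⟨hbC, hbc⟩
      have hadj : (H.induce Cᶜ).Adj ⟨b.1, hb⟩ ⟨a.1, ha⟩ := (hab.symm : H.Adj b.1 a.1)
      have hbK : (H.induce Cᶜ).connectedComponentMk ⟨b.1, hb⟩ = K := by
        rw [ConnectedComponent.connectedComponentMk_eq_of_adj hadj, haK]
      exact ih ⟨hb, hbK⟩ ht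

/-- Walks inside a component stay inside the component. -/
lemma walk_supp_reach (H : SimpleGraph V) {C : Set V}
    {K : (H.induce Cᶜ).ConnectedComponent} :
    ∀ {u v : ↥(Cᶜ)} (_ : (H.induce Cᶜ).Walk u v),
      (H.induce Cᶜ).connectedComponentMk u = K →
      ∃ (hu : u.1 ∈ Subtype.val '' K.supp) (hv : v.1 ∈ Subtype.val '' K.supp),
        (H.induce (Subtype.val '' K.supp)).Reachable ⟨u.1, hu⟩ ⟨v.1, hv⟩ := by
  intro u v p
  induction p with
  | nil =>
    intro hu
    exact ⟨⟨_, hu, rfl⟩, ⟨_, hu, rfl⟩, Reachable.refl _⟩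
  | @cons a b v hab p ih =>
    intro haK
    have hbK : (H.induce Cᶜ).connectedComponentMk b = K := by
      rw [← ConnectedComponent.connectedComponentMk_eq_of_adj hab, haK]
    obtain ⟨hb, hv, hr⟩ := ih hbK
    have ha : a.1 ∈ Subtype.val '' K.supp := ⟨a, haK, rfl⟩
    refine ⟨ha, hv, ?_⟩
    exact ((adj_induce (A := Subtype.val '' K.supp) (u := ⟨a.1, ha⟩) (v := ⟨b.1, hb⟩)
      (hab : H.Adj a.1 b.1))).reachable.trans hr

lemma supp_subset_compl {H : SimpleGraph V} {C : Set V}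
    (K : (H.induce Cᶜ).ConnectedComponent) : Subtype.val '' K.supp ⊆ Cᶜ := by
  rintro x ⟨u, _, rfl⟩; exact u.2

lemma supp_nonempty {H : SimpleGraph V} {C : Set V}
    (K : (H.induce Cᶜ).ConnectedComponent) : (Subtype.val '' K.supp).Nonempty := by
  obtain ⟨v, hv⟩ := K.exists_rep
  exact ⟨v.1, ⟨v, hv, rfl⟩⟩

lemma supp_connected (H : SimpleGraph V) {C : Set V}
    (K : (H.induce Cᶜ).ConnectedComponent) :
    (H.induce (Subtype.val '' K.supp)).Connected := by
  rw [connected_iff]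
  obtain ⟨v0, hv0⟩ := K.exists_rep
  refine ⟨?_, ⟨⟨v0.1, ⟨v0, hv0, rfl⟩⟩⟩⟩
  rintro ⟨x, hx⟩ ⟨y, hy⟩
  obtain ⟨u, hu, rfl⟩ := hx
  obtain ⟨w, hw, rfl⟩ := hy
  have hreach : (H.induce Cᶜ).Reachable u w := by
    rw [← ConnectedComponent.eq]
    rw [ConnectedComponent.mem_supp_iff] at hu hw
    rw [hu, hw]
  obtain ⟨p⟩ := hreach
  obtain ⟨hu', hv', hr⟩ := walk_supp_reach H p hu
  convert hr using 2

/-- Every vertex of a minimal clique separator has a neighbour in every component. -/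
lemma full_component (H : SimpleGraph V) {C : Set V} (hC : IsCliqueSeparator H C)
    (hmin : ∀ C' : Set V, C' ⊂ C → ¬ IsCliqueSeparator H C')
    (K : (H.induce Cᶜ).ConnectedComponent) {c : V} (hc : c ∈ C) :
    ∃ k ∈ Subtype.val '' K.supp, H.Adj c k := by
  obtain ⟨hCuniv, hCcl, hCdis⟩ := hC
  -- `Cᶜ` is nonempty
  have hccne : Nonempty ↥(Cᶜ) := by
    by_contra hcon
    apply hCuniv
    rw [Set.eq_univ_iff_forall]
    intro v
    by_contra hv
    exact hcon ⟨⟨v, hv⟩⟩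
  -- there is a vertex outside of `K`
  have hnpre : ¬ (H.induce Cᶜ).Preconnected := by
    intro hpre
    exact hCdis (connected_iff _ |>.mpr ⟨hpre, hccne⟩)
  rw [Preconnected] at hnpre
  push_neg at hnpre
  obtain ⟨x, y, hxy⟩ := hnpre
  have hxyK : (H.induce Cᶜ).connectedComponentMk x ≠ K ∨
      (H.induce Cᶜ).connectedComponentMk y ≠ K := by
    by_contra hcon
    push_neg at hcon
    exact hxy (ConnectedComponent.exact (hcon.1.trans hcon.2.symm))
  obtain ⟨t, htK⟩ : ∃ t : ↥(Cᶜ), (H.induce Cᶜ).connectedComponentMk t ≠ K := by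
    rcases hxyK with h | h
    · exact ⟨x, h⟩
    · exact ⟨y, h⟩
  obtain ⟨s, hs⟩ := K.exists_rep
  -- `C \ {c}` is not a clique separator
  have hsub : C \ {c} ⊂ C := Set.sdiff_singleton_ssubset.mpr hc
  have hns := hmin (C \ {c}) hsub
  rw [IsCliqueSeparator] at hns
  push_neg at hns
  have hne : C \ {c} ≠ Set.univ := by
    intro he
    have : c ∈ C \ {c} := he ▸ Set.mem_univ c
    exact this.2 rfl
  have hcon : (H.induce ((C \ {c})ᶜ)).Connected :=
    hns hne (hCcl.subset Set.diff_subset)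
  have hsmem : s.1 ∈ (C \ {c})ᶜ := fun h => s.2 h.1
  have htmem : t.1 ∈ (C \ {c})ᶜ := fun h => t.2 h.1
  obtain ⟨p⟩ := hcon.preconnected ⟨s.1, hsmem⟩ ⟨t.1, htmem⟩
  obtain ⟨k, ⟨hk, hkK⟩, hadj⟩ := walk_find_adj H p
    ⟨s.2, hs⟩
    (fun _ => htK)
  exact ⟨k, ⟨⟨k, hk⟩, hkK, rfl⟩, hadj⟩

/-- Key extension lemma: a minimal clique separator extends, inside each block, to a
strictly larger set with no clique separator. -/
lemma extension_lemma [Fintype V] (H : SimpleGraph V) {C S : Set V}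
    (hclC : H.IsClique C) (hSC : S ⊆ Cᶜ) (hSne : S.Nonempty)
    (hScon : (H.induce S).Connected)
    (hfull : ∀ c ∈ C, ∃ s ∈ S, H.Adj c s) :
    ∃ X : Set V, C ⊂ X ∧ X ⊆ C ∪ S ∧ NCS H X := by
  classical
  -- minimal nonempty connected covering subset `R ⊆ S`
  let P : Set V → Prop := fun R =>
    R ⊆ S ∧ R.Nonempty ∧ (H.induce R).Connected ∧ ∀ c ∈ C, ∃ r ∈ R, H.Adj c r
  have hPS : P S := ⟨le_refl S, hSne, hScon, fun c hc => hfull c hc⟩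
  obtain ⟨R, hPR, hRmin⟩ : ∃ R : Set V, P R ∧ ∀ R' : Set V, P R' → ¬ R' ⊂ R := by
    let T : Set ℕ := {n : ℕ | ∃ R : Set V, P R ∧ R.ncard = n}
    have hTne : T.Nonempty := ⟨S.ncard, S, hPS, rfl⟩
    obtain ⟨R, hPR, hcard⟩ := Nat.sInf_mem hTne
    refine ⟨R, hPR, fun R' hPR' hss => ?_⟩
    have h1 : R'.ncard < R.ncard := Set.ncard_lt_ncard hss (Set.toFinite R)
    have h2 : sInf T ≤ R'.ncard := Nat.sInf_le ⟨R', hPR', rfl⟩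
    omega
  obtain ⟨hRS, hRne, hRcon, hRcov⟩ := hPR
  have hRC : ∀ r ∈ R, r ∉ C := fun r hr => hSC (hRS hr)
  refine ⟨C ∪ R, ?_, Set.union_subset_union_right C hRS, ?_⟩
  · constructor
    · exact Set.subset_union_left
    · intro hsub
      obtain ⟨r, hr⟩ := hRne
      exact hRC r hr (hsub (Or.inr hr))
  by_cases hex : ∃ r ∈ R, ∀ c ∈ C, H.Adj r c
  -- Case 1: some vertex of `R` is complete to `C`; then `R = {r}` and `C ∪ R` is a clique.
  · obtain ⟨r, hrR, hr⟩ := hex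
    have hPr : P {r} := by
      refine ⟨Set.singleton_subset_iff.mpr (hRS hrR), ⟨r, rfl⟩, ?_, ?_⟩
      · rw [connected_iff]
        refine ⟨fun u v => ?_, ⟨⟨r, rfl⟩⟩⟩
        have : u = v := Subtype.ext (u.2.trans v.2.symm)
        exact this ▸ Reachable.refl u
      · exact fun c hc => ⟨r, rfl, (hr c hc).symm⟩
    have hReq : R = {r} := by
      by_contra hne
      exact hRmin {r} hPr ⟨Set.singleton_subset_iff.mpr hrR, fun hsub => hne (Set.Subset.antisymm (hsub) (Set.singleton_subset_iff.mpr hrR))⟩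
    subst hReq
    apply clique_ncs
    intro x hx y hy hxy
    rcases hx with hx | hx <;> rcases hy with hy | hy
    · exact hclC hx hy hxy
    · rw [Set.mem_singleton_iff] at hy; subst hy
      exact (hr x hx).symm
    · rw [Set.mem_singleton_iff] at hx; subst hx
      exact hr y hy
    · rw [Set.mem_singleton_iff] at hx hy
      exact absurd (hx.trans hy.symm) hxy
  -- Case 2: no vertex of `R` is complete to `C`.
  · push_neg at hex
    intro D hDX hDne hDcl
    set X : Set V := C ∪ R with hXdef
    by_cases hDR : (D ∩ R).Nonempty
    · -- `D` meets `R`; then `C ⊄ D`, and we use the minimality of `R`.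
      obtain ⟨r₀, hr₀D, hr₀R⟩ := hDR
      have hCD : (C \ D).Nonempty := by
        by_contra hcon
        rw [Set.not_nonempty_iff_eq_empty, Set.diff_eq_empty] at hcon
        obtain ⟨c, hcC, hnadj⟩ := hex r₀ hr₀R
        refine hnadj ?_
        exact (hDcl (hcon hcC) hr₀D (fun e => hRC r₀ hr₀R (e ▸ hcC))).symm
      obtain ⟨c₁, hc₁C, hc₁D⟩ := hCD
      have hc₁X : c₁ ∈ X \ D := ⟨Or.inl hc₁C, hc₁D⟩
      -- the reachable part from `c₁`
      let Z : Set V := {v : V | ∃ h : v ∈ X \ D,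
        (H.induce (X \ D)).Reachable ⟨c₁, hc₁X⟩ ⟨v, h⟩}
      have hZadj : ∀ a b, a ∈ Z → b ∈ X \ D → H.Adj a b → b ∈ Z := by
        rintro a b ⟨ha, hr⟩ hb hab
        exact ⟨hb, hr.trans (adj_induce (A := X \ D) (u := ⟨a, ha⟩) (v := ⟨b, hb⟩) hab).reachable⟩
      have hCZ : ∀ v ∈ C, v ∉ D → v ∈ Z := by
        intro v hv hvD
        by_cases hvc : v = c₁
        · subst hvc
          exact ⟨hc₁X, Reachable.refl _⟩
        · refine hZadj c₁ v ⟨hc₁X, Reachable.refl _⟩ ⟨Or.inl hv, hvD⟩ ?_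
          exact hclC hc₁C hv (fun e => hvc e.symm)
      -- the rest
      have hYempty : X \ D ⊆ Z := by
        by_contra hcon
        rw [Set.not_subset] at hcon
        have hY : ((X \ D) \ Z).Nonempty := by
          obtain ⟨y, hy1, hy2⟩ := hcon
          exact ⟨y, hy1, hy2⟩
        set Y : Set V := (X \ D) \ Z with hYdef
        have hYC : ∀ y ∈ Y, y ∉ C := by
          rintro y ⟨hy1, hy2⟩ hyC
          exact hy2 (hCZ y hyC hy1.2)
        have hYR : Y ⊆ R := by
          rintro y hy
          rcases hy.1.1 with h | h
          · exact absurd h (hYC y hy)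
          · exact h
        have hYD : ∀ y ∈ Y, y ∉ D := fun y hy => hy.1.2
        -- `W = R \ Y` contradicts minimality of `R`
        have hWP : P (R \ Y) := by
          have hr₀W : r₀ ∈ R \ Y := ⟨hr₀R, fun hY' => hYD r₀ hY' hr₀D⟩
          refine ⟨Set.diff_subset.trans hRS, ⟨r₀, hr₀W⟩, ?_, ?_⟩
          · -- connectivity of `R \ Y`
            rw [connected_iff]
            refine ⟨?_, ⟨⟨r₀, hr₀W⟩⟩⟩
            have hWnotY : ∀ w ∈ R, w ∉ D → w ∉ Y → w ∈ Z := by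
              intro w hw hwD hwY
              by_contra hwZ
              exact hwY ⟨⟨Or.inr hw, hwD⟩, hwZ⟩
            -- every vertex of `W` reaches a vertex of `R ∩ D` inside `W`
            have key : ∀ {x y : ↥(R \ Y)},
                (H.induce R).Walk ⟨x.1, x.2.1⟩ ⟨y.1, y.2.1⟩ → y.1 ∈ D →
                ∃ d : ↥(R \ Y), d.1 ∈ D ∧ (H.induce (R \ Y)).Reachable x d := by
              intro x y p
              have hgen : ∀ {a b : ↥R}, (H.induce R).Walk a b → b.1 ∈ D →
                  ∀ ha' : a.1 ∈ R \ Y,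
                  ∃ d : ↥(R \ Y), d.1 ∈ D ∧ (H.induce (R \ Y)).Reachable ⟨a.1, ha'⟩ d := by
                intro a b q
                induction q with
                | nil =>
                  intro hb ha'
                  exact ⟨⟨_, ha'⟩, hb, Reachable.refl _⟩
                | @cons a b' b hab q ih =>
                  intro hb ha'
                  by_cases haD : a.1 ∈ D
                  · exact ⟨⟨a.1, ha'⟩, haD, Reachable.refl _⟩
                  · have haZ : a.1 ∈ Z := hWnotY a.1 a.2 haD ha'.2
                    have hb'Y : b'.1 ∉ Y := by
                      intro hbY
                      have hb'Z : b'.1 ∈ Z := hZadj a.1 b'.1 haZ hbY.1 hab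
                      exact hbY.2 hb'Z
                    have hb'W : b'.1 ∈ R \ Y := ⟨b'.2, hb'Y⟩
                    obtain ⟨d, hdD, hdr⟩ := ih hb hb'W
                    refine ⟨d, hdD, ?_⟩
                    exact ((adj_induce (A := R \ Y) (u := ⟨a.1, ha'⟩) (v := ⟨b'.1, hb'W⟩)
                      (hab : H.Adj a.1 b'.1)).reachable).trans hdr
              intro hy
              exact hgen p hy x.2
            intro u v
            obtain ⟨pu⟩ := hRcon.preconnected ⟨u.1, u.2.1⟩ ⟨r₀, hr₀R⟩
            obtain ⟨pv⟩ := hRcon.preconnected ⟨v.1, v.2.1⟩ ⟨r₀, hr₀R⟩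
            obtain ⟨du, hduD, hru⟩ := key (x := u) (y := ⟨r₀, hr₀W⟩) pu hr₀D
            obtain ⟨dv, hdvD, hrv⟩ := key (x := v) (y := ⟨r₀, hr₀W⟩) pv hr₀D
            have hdd : (H.induce (R \ Y)).Reachable du dv := by
              by_cases he : du = dv
              · exact he ▸ Reachable.refl du
              · refine (adj_induce ?_).reachable
                exact hDcl hduD hdvD (fun e => he (Subtype.ext e))
            exact (hru.trans hdd).trans hrv.symm
          · -- covering
            intro c hc
            by_cases hcD : c ∈ D
            · refine ⟨r₀, hr₀W, ?_⟩
              exact hDcl hcD hr₀D (fun e => hRC r₀ hr₀R (e ▸ hc))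
            · have hcZ : c ∈ Z := hCZ c hc hcD
              obtain ⟨r, hrR, hadj⟩ := hRcov c hc
              have hrY : r ∉ Y := by
                intro hrY'
                exact hrY'.2 (hZadj c r hcZ hrY'.1 hadj)
              exact ⟨r, ⟨hrR, hrY⟩, hadj⟩
        refine hRmin (R \ Y) hWP ⟨Set.diff_subset, ?_⟩
        intro hsub
        obtain ⟨y, hyY⟩ := hY
        exact (hsub (hYR hyY)).2 hyY
      -- conclude connectivity of `X \ D`
      rw [connected_iff]
      refine ⟨?_, ⟨⟨c₁, hc₁X⟩⟩⟩
      intro u v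
      obtain ⟨hu, hru⟩ := hYempty u.2
      obtain ⟨hv, hrv⟩ := hYempty v.2
      have h1 : (H.induce (X \ D)).Reachable ⟨c₁, hc₁X⟩ u := by
        convert hru using 2
      have h2 : (H.induce (X \ D)).Reachable ⟨c₁, hc₁X⟩ v := by
        convert hrv using 2
      exact h1.symm.trans h2
    · -- `D ∩ R = ∅`: then `D ⊆ C` and `X \ D ⊇ R` with all of `C \ D` attached to `R`.
      rw [Set.not_nonempty_iff_eq_empty] at hDR
      have hRXD : R ⊆ X \ D := by
        intro r hr
        refine ⟨Or.inr hr, fun hrD => ?_⟩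
        exact Set.eq_empty_iff_forall_notMem.mp hDR r ⟨hrD, hr⟩
      apply glue_connected H hRXD hRcon
      rintro v ⟨⟨hvX, hvD⟩, hvR⟩
      have hvC : v ∈ C := by
        rcases hvX with h | h
        · exact h
        · exact absurd h hvR
      obtain ⟨r, hrR, hadj⟩ := hRcov v hvC
      exact ⟨r, hrR, hadj⟩

/-- Crossing lemma: any set inducing a subgraph with no clique separator lies inside
one block `Sᵢ ∪ C`. -/
lemma crossing (H : SimpleGraph V) {C A : Set V} (hC : IsCliqueSeparator H C)
    (hA : NCS H A) :
    ∃ K : (H.induce Cᶜ).ConnectedComponent, A ⊆ Subtype.val '' K.supp ∪ C := by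
  have hccne : ∃ v, v ∈ Cᶜ := by
    by_contra hcon
    push_neg at hcon
    exact hC.1 (Set.eq_univ_of_forall (fun v => not_not.mp (hcon v)))
  by_cases hAC : A ⊆ C
  · obtain ⟨v0, hv0⟩ := hccne
    exact ⟨(H.induce Cᶜ).connectedComponentMk ⟨v0, hv0⟩,
      fun x hx => Or.inr (hAC hx)⟩
  · rw [Set.not_subset] at hAC
    obtain ⟨a, haA, haC⟩ := hAC
    refine ⟨(H.induce Cᶜ).connectedComponentMk ⟨a, haC⟩, ?_⟩
    intro b hbB
    by_cases hbC : b ∈ C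
    · exact Or.inr hbC
    · left
      -- `A \ C` is connected
      have hcon : (H.induce (A \ (A ∩ C))).Connected := by
        apply hA
        · exact Set.inter_subset_left
        · intro he
          have h5 : a ∈ A ∩ C := by rw [he]; exact haA
          exact haC h5.2
        · exact hC.2.1.subset Set.inter_subset_right
      have hACeq : A \ (A ∩ C) = A \ C := by
        ext x
        constructor
        · rintro ⟨h1, h2⟩
          exact ⟨h1, fun hc => h2 ⟨h1, hc⟩⟩
        · rintro ⟨h1, h2⟩
          exact ⟨h1, fun hc => h2 hc.2⟩
      rw [hACeq] at hcon
      have hreach := hcon.preconnected ⟨b, ⟨hbB, hbC⟩⟩ ⟨a, ⟨haA, haC⟩⟩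
      have hreach' := reach_mono H (show A \ C ⊆ Cᶜ from fun x hx => hx.2) hreach
      refine ⟨⟨b, hbC⟩, ?_, rfl⟩
      rw [ConnectedComponent.mem_supp_iff]
      exact ConnectedComponent.sound hreach'

end CliqueSepAux

open CliqueSepAux in
/-- If `C` is a minimal clique separator of a finite graph `H` and
`S₁, …, S_k` are the connected components of `H[V ∖ C]`, then
`D(H) = ⋃ᵢ D(H[Sᵢ ∪ C])`. -/
theorem stmt_0 {V : Type*} [Fintype V] (H : SimpleGraph V) (C : Set V)
    (hC : IsCliqueSeparator H C)
    (hmin : ∀ C' : Set V, C' ⊂ C → ¬ IsCliqueSeparator H C') :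
    DSetIn H Set.univ =
      ⋃ (K : (H.induce Cᶜ).ConnectedComponent),
        DSetIn H (Subtype.val '' K.supp ∪ C) := by
  classical
  ext A
  simp only [Set.mem_iUnion]
  constructor
  · rintro ⟨-, hA2, hA3⟩
    obtain ⟨K, hAK⟩ := crossing H hC ((ncs_iff H A).mp hA2)
    exact ⟨K, hAK, hA2, fun B hAB _ hB => hA3 B hAB (Set.subset_univ B) hB⟩
  · rintro ⟨K, hA1, hA2, hA3⟩
    refine ⟨Set.subset_univ A, hA2, fun B hAB _ hB => ?_⟩
    obtain ⟨J, hBJ⟩ := crossing H hC ((ncs_iff H B).mp hB)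
    by_cases hBK : B ⊆ Subtype.val '' K.supp ∪ C
    · exact hA3 B hAB hBK hB
    · exfalso
      obtain ⟨b, hbB, hbK⟩ := Set.not_subset.mp hBK
      have hbC : b ∉ C := fun h => hbK (Or.inr h)
      have hbJ : b ∈ Subtype.val '' J.supp := (hBJ hbB).resolve_right hbC
      have hJK : J ≠ K := by
        rintro rfl
        exact hbK (Or.inl hbJ)
      -- `A ⊆ C`
      have hAC : A ⊆ C := by
        intro x hx
        rcases hA1 hx with hxK | hxC
        · rcases hBJ (hAB hx) with hxJ | hxC
          · exfalso
            obtain ⟨u, hu, rfl⟩ := hxK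
            obtain ⟨u', hu', he⟩ := hxJ
            have heq : u' = u := Subtype.ext he
            subst heq
            rw [ConnectedComponent.mem_supp_iff] at hu hu'
            exact hJK (hu'.symm.trans hu)
          · exact hxC
        · exact hxC
      -- `C = A` by maximality
      have hCA : C = A :=
        hA3 C hAC Set.subset_union_right ((ncs_iff H C).mpr (clique_ncs H hC.2.1))
      -- extension lemma gives a contradiction
      obtain ⟨X, hCX, hXsub, hXncs⟩ :=
        extension_lemma H hC.2.1 (supp_subset_compl K) (supp_nonempty K)
          (supp_connected H K)
          (fun c hc => by
            obtain ⟨k, hk, hadj⟩ := full_component H hC hmin K hc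
            exact ⟨k, hk, hadj⟩)
      have hXA : X = A := by
        apply hA3 X (hCA ▸ hCX.subset)
        · intro x hx
          rcases hXsub hx with h | h
          · exact Or.inr h
          · exact Or.inl h
        · exact (ncs_iff H X).mpr hXncs
      exact hCX.ne (hXA.trans hCA.symm).symm
end

section
/- Let H be a pattern graph (a connected simple graph with at least two vertices) that has a clique separator, and suppose that for every integer k ≥ 3 and every clique embedding ψ from K_k to H one has k < 2·wed(ψ) (that is, the clique embedding power of H is less than 2). Then every minimal clique separator of H has cardinality one or two. -/
/-- Two vertex sets `A, B` *touch* in `H` if they intersect or there is an edge of `H`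
between them. -/
def Touches {V : Type*} (H : SimpleGraph V) (A B : Set V) : Prop :=
  (A ∩ B).Nonempty ∨ ∃ a ∈ A, ∃ b ∈ B, H.Adj a b

/-- A *clique embedding* from `K_k` to `H`: every vertex `u` of `K_k` is assigned a
nonempty subset `ψ u` of vertices of `H` inducing a connected subgraph, and any two
assigned subsets touch. -/
structure IsCliqueEmbedding {V : Type*} (H : SimpleGraph V) (k : ℕ)
    (ψ : Fin k → Set V) : Prop where
  nonempty : ∀ u, (ψ u).Nonempty
  connected : ∀ u, (H.induce (ψ u)).Connected
  touches : ∀ u v, Touches H (ψ u) (ψ v)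

/-- The *weak depth* of an edge `{a,b}`: the number of `u` with `ψ u ∩ {a,b} ≠ ∅`. -/
noncomputable def weakDepth {V : Type*} (k : ℕ) (ψ : Fin k → Set V) (a b : V) : ℕ :=
  Nat.card {u : Fin k // a ∈ ψ u ∨ b ∈ ψ u}

/-- The *weak edge depth* `wed(ψ)`: the maximum weak depth over all edges of `H`. -/
noncomputable def wed {V : Type*} (H : SimpleGraph V) (k : ℕ) (ψ : Fin k → Set V) : ℕ :=
  sSup {d : ℕ | ∃ a b : V, H.Adj a b ∧ d = weakDepth k ψ a b}

section Aux

open SimpleGraph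

lemma aux_mono {V : Type*} (H : SimpleGraph V) {s t : Set V} (hst : s ⊆ t) {u v : ↥s}
    (h : (H.induce s).Reachable u v) :
    (H.induce t).Reachable ⟨u.1, hst u.2⟩ ⟨v.1, hst v.2⟩ := by
  let f : H.induce s →g H.induce t := ⟨fun x => ⟨x.1, hst x.2⟩, fun {a b} hab => hab⟩
  exact h.map f

lemma aux_walk {V : Type*} (H : SimpleGraph V) {s A : Set V} {u v : ↥s}
    (w : (H.induce s).Walk u v) :
    (∀ x ∈ w.support, x.1 ∈ A) → ∀ (hu : u.1 ∈ A) (hv : v.1 ∈ A),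
      (H.induce A).Reachable ⟨u.1, hu⟩ ⟨v.1, hv⟩ := by
  induction w with
  | nil => intro _ hu hv; exact SimpleGraph.Reachable.refl _
  | @cons a b c hadj p ih =>
    intro hsup hu hv
    have hb : b.1 ∈ A := hsup b (by simp [SimpleGraph.Walk.support_cons])
    have hA : (H.induce A).Adj ⟨a.1, hu⟩ ⟨b.1, hb⟩ := hadj
    exact hA.reachable.trans (ih (fun x hx => hsup x (by
      simp only [SimpleGraph.Walk.support_cons, List.mem_cons]; exact Or.inr hx)) hb hv)

lemma aux_key {V : Type*} (H : SimpleGraph V) {C : Set V} {v : V} {S : Set V}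
    (hS : S ⊆ Cᶜ) (hcl : ∀ p ∈ S, ∀ q ∈ Cᶜ, H.Adj p q → q ∈ S)
    {p q : ↥(C \ {v})ᶜ} (w : (H.induce (C \ {v})ᶜ).Walk p q) :
    p.1 ∈ S → q.1 ∉ S → ∃ a ∈ S, H.Adj v a := by
  induction w with
  | nil => intro hp hq; exact absurd hp hq
  | @cons a b c hadj p' ih =>
    intro hp hq
    by_cases hb : b.1 = v
    · refine ⟨a.1, hp, ?_⟩
      have h2 : H.Adj a.1 b.1 := hadj
      rw [hb] at h2; exact h2.symm
    · have hbC : b.1 ∈ Cᶜ := by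
        have h3 := b.2
        simp only [Set.mem_compl_iff, Set.mem_diff, Set.mem_singleton_iff, not_and,
          not_not] at h3 ⊢
        intro hbc; exact hb (h3 hbc)
      exact ih (hcl a.1 hp b.1 hbC hadj) hq

lemma aux_singleton_conn {V : Type*} (H : SimpleGraph V) (v : V) :
    (H.induce {v}).Connected := by
  have : Nonempty ↥({v} : Set V) := ⟨⟨v, rfl⟩⟩
  refine ⟨fun a b => ?_⟩
  have : a = b := Subtype.ext (a.2.trans b.2.symm)
  rw [this]

lemma aux_depth_le_two {V : Type*} {k : ℕ} (ψ : Fin k → Set V)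
    (huniq : ∀ x : V, ∀ u u' : Fin k, x ∈ ψ u → x ∈ ψ u' → u = u') (a b : V) :
    weakDepth k ψ a b ≤ 2 := by
  have hcoe : weakDepth k ψ a b = ({u : Fin k | a ∈ ψ u ∨ b ∈ ψ u}).ncard := by
    rw [weakDepth, ← Nat.card_coe_set_eq]
    rfl
  rw [hcoe]
  by_cases ha : ∃ u, a ∈ ψ u
  · obtain ⟨ua, hua⟩ := ha
    by_cases hb : ∃ u, b ∈ ψ u
    · obtain ⟨ub, hub⟩ := hb
      have hsub : {u : Fin k | a ∈ ψ u ∨ b ∈ ψ u} ⊆ {ua, ub} := by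
        rintro u (hu | hu)
        · exact Or.inl (huniq a u ua hu hua)
        · exact Or.inr (huniq b u ub hu hub)
      calc ({u : Fin k | a ∈ ψ u ∨ b ∈ ψ u}).ncard
          ≤ ({ua, ub} : Set (Fin k)).ncard := Set.ncard_le_ncard hsub (Set.toFinite _)
        _ ≤ ({ub} : Set (Fin k)).ncard + 1 := Set.ncard_insert_le _ _
        _ ≤ 2 := by rw [Set.ncard_singleton]
    · have hsub : {u : Fin k | a ∈ ψ u ∨ b ∈ ψ u} ⊆ {ua} := by
        rintro u (hu | hu)
        · exact huniq a u ua hu hua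
        · exact absurd ⟨u, hu⟩ hb
      calc ({u : Fin k | a ∈ ψ u ∨ b ∈ ψ u}).ncard
          ≤ ({ua} : Set (Fin k)).ncard := Set.ncard_le_ncard hsub (Set.toFinite _)
        _ ≤ 2 := by rw [Set.ncard_singleton]; omega
  · by_cases hb : ∃ u, b ∈ ψ u
    · obtain ⟨ub, hub⟩ := hb
      have hsub : {u : Fin k | a ∈ ψ u ∨ b ∈ ψ u} ⊆ {ub} := by
        rintro u (hu | hu)
        · exact absurd ⟨u, hu⟩ ha
        · exact huniq b u ub hu hub
      calc ({u : Fin k | a ∈ ψ u ∨ b ∈ ψ u}).ncard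
          ≤ ({ub} : Set (Fin k)).ncard := Set.ncard_le_ncard hsub (Set.toFinite _)
        _ ≤ 2 := by rw [Set.ncard_singleton]; omega
    · have hsub : {u : Fin k | a ∈ ψ u ∨ b ∈ ψ u} ⊆ (∅ : Set (Fin k)) := by
        rintro u (hu | hu)
        · exact absurd ⟨u, hu⟩ ha
        · exact absurd ⟨u, hu⟩ hb
      calc ({u : Fin k | a ∈ ψ u ∨ b ∈ ψ u}).ncard
          ≤ (∅ : Set (Fin k)).ncard := Set.ncard_le_ncard hsub (Set.toFinite _)
        _ ≤ 2 := by rw [Set.ncard_empty]; omega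

/-- The reachability class of a base point inside an induced subgraph, as a set of `V`. -/
def reachClass {V : Type*} (H : SimpleGraph V) (s : Set V) (z : ↥s) : Set V :=
  {w | ∃ h : w ∈ s, (H.induce s).Reachable z ⟨w, h⟩}

lemma reachClass_subset {V : Type*} (H : SimpleGraph V) (s : Set V) (z : ↥s) :
    reachClass H s z ⊆ s := by
  rintro w ⟨h, -⟩; exact h

lemma mem_reachClass_self {V : Type*} (H : SimpleGraph V) (s : Set V) (z : ↥s) :
    z.1 ∈ reachClass H s z := ⟨z.2, SimpleGraph.Reachable.refl _⟩

lemma mem_reachClass_of_reachable {V : Type*} (H : SimpleGraph V) {s : Set V} {z p q : ↥s}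
    (hp : p.1 ∈ reachClass H s z) (h : (H.induce s).Reachable p q) :
    q.1 ∈ reachClass H s z := by
  obtain ⟨h1, h2⟩ := hp
  exact ⟨q.2, h2.trans h⟩

lemma reachClass_adj_closed {V : Type*} (H : SimpleGraph V) (s : Set V) (z : ↥s) :
    ∀ p ∈ reachClass H s z, ∀ q ∈ s, H.Adj p q → q ∈ reachClass H s z := by
  rintro p ⟨hp, hr⟩ q hq hadj
  exact ⟨hq, hr.trans (SimpleGraph.Adj.reachable
    (show (H.induce s).Adj ⟨p, hp⟩ ⟨q, hq⟩ from hadj))⟩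

lemma reachClass_conn {V : Type*} (H : SimpleGraph V) (s : Set V) (z : ↥s)
    (p q : V) (hp : p ∈ reachClass H s z) (hq : q ∈ reachClass H s z) :
    (H.induce (reachClass H s z)).Reachable ⟨p, hp⟩ ⟨q, hq⟩ := by
  obtain ⟨hp', rp⟩ := id hp
  obtain ⟨hq', rq⟩ := id hq
  classical
  obtain ⟨w⟩ := rp.symm.trans rq
  have hsup : ∀ x ∈ w.support, x.1 ∈ reachClass H s z := by
    intro x hx
    exact mem_reachClass_of_reachable H hp ⟨w.takeUntil x hx⟩
  exact aux_walk H w hsup hp hq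

lemma aux_union_conn {V : Type*} (H : SimpleGraph V) {A : Set V}
    (hA : ∀ (p q : V) (hp : p ∈ A) (hq : q ∈ A), (H.induce A).Reachable ⟨p, hp⟩ ⟨q, hq⟩)
    {v a₀ : V} (ha₀ : a₀ ∈ A) (hadj : H.Adj v a₀) :
    (H.induce (A ∪ {v})).Connected := by
  have key : ∀ (p : V) (hp : p ∈ A ∪ {v}),
      (H.induce (A ∪ {v})).Reachable ⟨p, hp⟩ ⟨a₀, Or.inl ha₀⟩ := by
    intro p hp
    rcases id hp with hpA | hpv
    · exact aux_mono H Set.subset_union_left (hA p a₀ hpA ha₀)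
    · have hpv' : p = v := hpv
      subst hpv'
      exact (show (H.induce (A ∪ {p})).Adj ⟨p, hp⟩ ⟨a₀, Or.inl ha₀⟩ from hadj).reachable
  haveI : Nonempty ↥(A ∪ {v}) := ⟨⟨a₀, Or.inl ha₀⟩⟩
  exact ⟨fun p q => (key p.1 p.2).trans (key q.1 q.2).symm⟩

lemma touches_symm {V : Type*} {H : SimpleGraph V} {P Q : Set V}
    (h : Touches H P Q) : Touches H Q P := by
  rcases h with ⟨w, hw⟩ | ⟨a, ha, b, hb, hab⟩
  · exact Or.inl ⟨w, hw.2, hw.1⟩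
  · exact Or.inr ⟨b, hb, a, ha, hab.symm⟩

end Aux

/-- Let `H` be a pattern graph (connected, at least two vertices) that
has a clique separator, and suppose every clique embedding `ψ : K_k → H` with `k ≥ 3`
satisfies `k < 2·wed(ψ)`.  Then every minimal clique separator of `H` has cardinality
one or two. -/
theorem stmt_1 {V : Type*} [Fintype V] (H : SimpleGraph V)
    (hconn : H.Connected) (hcard : 2 ≤ Fintype.card V)
    (hsep : ∃ C : Set V, IsCliqueSeparator H C)
    (hsmall : ∀ (k : ℕ) (ψ : Fin k → Set V), 3 ≤ k → IsCliqueEmbedding H k ψ →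
      k < 2 * wed H k ψ)
    (C : Set V) (hC : IsCliqueSeparator H C)
    (hmin : ∀ C' : Set V, C' ⊂ C → ¬ IsCliqueSeparator H C') :
    C.ncard = 1 ∨ C.ncard = 2 := by
  classical
  obtain ⟨hCuniv, hclq, hdisc⟩ := hC
  -- C is nonempty
  have hCne : C.Nonempty := by
    rcases Set.eq_empty_or_nonempty C with h | h
    · exfalso
      apply hdisc
      subst h
      rw [Set.compl_empty]
      obtain ⟨v0⟩ := hconn.nonempty
      haveI : Nonempty ↥(Set.univ : Set V) := ⟨⟨v0, trivial⟩⟩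
      refine ⟨fun p q => ?_⟩
      let f : H →g H.induce (Set.univ : Set V) := ⟨fun w => ⟨w, trivial⟩, fun {a b} hab => hab⟩
      exact (hconn.preconnected p.1 q.1).map f
    · exact h
  -- complement nonempty, disconnected pieces
  have hCc_ne : Cᶜ.Nonempty := by
    by_contra h
    rw [Set.not_nonempty_iff_eq_empty, Set.compl_empty_iff] at h
    exact hCuniv h
  obtain ⟨z0, hz0⟩ := hCc_ne
  haveI : Nonempty ↥(Cᶜ : Set V) := ⟨⟨z0, hz0⟩⟩
  have hnp : ¬ (H.induce Cᶜ).Preconnected := fun h => hdisc ⟨h⟩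
  simp only [SimpleGraph.Preconnected, not_forall] at hnp
  obtain ⟨x, y, hxy⟩ := hnp
  set A : Set V := reachClass H Cᶜ x with hAdef
  set B : Set V := reachClass H Cᶜ y with hBdef
  have hAc : A ⊆ Cᶜ := reachClass_subset H Cᶜ x
  have hBc : B ⊆ Cᶜ := reachClass_subset H Cᶜ y
  have hxA : x.1 ∈ A := mem_reachClass_self H Cᶜ x
  have hyB : y.1 ∈ B := mem_reachClass_self H Cᶜ y
  have hyA : y.1 ∉ A := by
    rintro ⟨h, hr⟩
    exact hxy hr
  have hxB : x.1 ∉ B := by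
    rintro ⟨h, hr⟩
    exact hxy hr.symm
  have hABdisj : ∀ w, w ∈ A → w ∈ B → False := by
    rintro w ⟨h1, r1⟩ ⟨h2, r2⟩
    exact hxy (r1.trans r2.symm)
  have hAcl : ∀ p ∈ A, ∀ q ∈ Cᶜ, H.Adj p q → q ∈ A := reachClass_adj_closed H Cᶜ x
  have hBcl : ∀ p ∈ B, ∀ q ∈ Cᶜ, H.Adj p q → q ∈ B := reachClass_adj_closed H Cᶜ y
  -- every vertex of C is adjacent to A and to B
  have hadjcomp : ∀ v ∈ C, (∃ a ∈ A, H.Adj v a) ∧ (∃ b ∈ B, H.Adj v b) := by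
    intro v hv
    have hss : C \ {v} ⊂ C := Set.sdiff_singleton_ssubset.mpr hv
    have hnotsep := hmin _ hss
    have hne : C \ {v} ≠ Set.univ := by
      intro h
      have : v ∈ C \ {v} := h ▸ Set.mem_univ v
      exact this.2 rfl
    have hclq' : H.IsClique (C \ {v}) := hclq.subset Set.diff_subset
    have hconn' : (H.induce (C \ {v})ᶜ).Connected := by
      by_contra h
      exact hnotsep ⟨hne, hclq', h⟩
    have hsub : (Cᶜ : Set V) ⊆ (C \ {v})ᶜ := Set.compl_subset_compl.mpr Set.diff_subset
    obtain ⟨w⟩ := hconn'.preconnected ⟨x.1, hsub x.2⟩ ⟨y.1, hsub y.2⟩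
    constructor
    · exact aux_key H hAc hAcl w hxA hyA
    · exact aux_key H hBc hBcl w.reverse hyB hxB
  have hfin : C.Finite := C.toFinite
  rcases Nat.lt_or_ge C.ncard 2 with hlt | hge
  · left
    have : 0 < C.ncard := (Set.ncard_pos hfin).mpr hCne
    omega
  · right
    obtain ⟨v₁, hv₁⟩ := hCne
    set F : Finset V := hfin.toFinset with hFdef
    have hFmem : ∀ w, w ∈ F ↔ w ∈ C := fun w => Set.Finite.mem_toFinset _
    have hFcard : F.card = C.ncard := (Set.ncard_eq_toFinset_card C hfin).symm
    set t : Finset V := F.erase v₁ with htdef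
    have htcard : t.card = C.ncard - 1 := by
      rw [htdef, Finset.card_erase_of_mem ((hFmem v₁).mpr hv₁), hFcard]
    set m := t.card with hmdef
    let f : Fin m → V := fun i => ((t.equivFin.symm i : ↥t) : V)
    have hfmem : ∀ i, f i ∈ C ∧ f i ≠ v₁ := by
      intro i
      have h : f i ∈ F.erase v₁ := (t.equivFin.symm i).2
      rw [Finset.mem_erase] at h
      exact ⟨(hFmem _).mp h.2, h.1⟩
    have hfinj : Function.Injective f :=
      fun i j h => t.equivFin.symm.injective (Subtype.ext h)
    obtain ⟨⟨a₀, ha₀A, hadjva₀⟩, ⟨b₀, hb₀B, hadjvb₀⟩⟩ := hadjcomp v₁ hv₁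
    set ψ : Fin (m + 2) → Set V :=
      Fin.cons (A ∪ {v₁}) (Fin.cons B fun i => {f i}) with hψdef
    have hψ0 : ψ 0 = A ∪ {v₁} := rfl
    have hψ1 : ψ 1 = B := by
      show ψ (Fin.succ 0) = B
      rw [hψdef, Fin.cons_succ, Fin.cons_zero]
    have hψs : ∀ i : Fin m, ψ i.succ.succ = {f i} := by
      intro i; rw [hψdef, Fin.cons_succ, Fin.cons_succ]
    have hcases : ∀ u : Fin (m + 2), u = 0 ∨ u = 1 ∨ ∃ i : Fin m, u = i.succ.succ := by
      intro u
      refine Fin.cases ?_ (fun j => ?_) u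
      · exact Or.inl rfl
      · refine Fin.cases ?_ (fun i => ?_) j
        · exact Or.inr (Or.inl (by rw [Fin.succ_zero_eq_one]))
        · exact Or.inr (Or.inr ⟨i, rfl⟩)
    -- the clique embedding
    have hemb : IsCliqueEmbedding H (m + 2) ψ := by
      constructor
      · intro u
        rcases hcases u with rfl | rfl | ⟨i, rfl⟩
        · rw [hψ0]; exact ⟨v₁, Or.inr rfl⟩
        · rw [hψ1]; exact ⟨y.1, hyB⟩
        · rw [hψs]; exact ⟨f i, rfl⟩
      · intro u
        rcases hcases u with rfl | rfl | ⟨i, rfl⟩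
        · rw [hψ0]
          exact aux_union_conn H (reachClass_conn H Cᶜ x) ha₀A hadjva₀
        · rw [hψ1]
          haveI : Nonempty ↥B := ⟨⟨y.1, hyB⟩⟩
          exact ⟨fun p q => by
            have h := reachClass_conn H Cᶜ y p.1 q.1 p.2 q.2
            exact h⟩
        · rw [hψs]; exact aux_singleton_conn H (f i)
      · have t01 : Touches H (A ∪ {v₁}) B := Or.inr ⟨v₁, Or.inr rfl, b₀, hb₀B, hadjvb₀⟩
        have t0i : ∀ i : Fin m, Touches H (A ∪ {v₁}) {f i} := fun i =>
          Or.inr ⟨v₁, Or.inr rfl, f i, rfl, hclq hv₁ (hfmem i).1 (Ne.symm (hfmem i).2)⟩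
        have t1i : ∀ i : Fin m, Touches H B {f i} := by
          intro i
          obtain ⟨-, b, hbB, hadj⟩ := hadjcomp (f i) (hfmem i).1
          exact Or.inr ⟨b, hbB, f i, rfl, hadj.symm⟩
        have tij : ∀ i j : Fin m, Touches H {f i} {f j} := by
          intro i j
          by_cases hij : i = j
          · subst hij; exact Or.inl ⟨f i, rfl, rfl⟩
          · exact Or.inr ⟨f i, rfl, f j, rfl,
              hclq (hfmem i).1 (hfmem j).1 (fun h => hij (hfinj h))⟩
        intro u v
        rcases hcases u with rfl | rfl | ⟨i, rfl⟩ <;>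
          rcases hcases v with rfl | rfl | ⟨j, rfl⟩
        · rw [hψ0]; exact Or.inl ⟨v₁, Or.inr rfl, Or.inr rfl⟩
        · rw [hψ0, hψ1]; exact t01
        · rw [hψ0, hψs]; exact t0i j
        · rw [hψ0, hψ1]; exact touches_symm t01
        · rw [hψ1]; exact Or.inl ⟨y.1, hyB, hyB⟩
        · rw [hψ1, hψs]; exact t1i j
        · rw [hψ0, hψs]; exact touches_symm (t0i i)
        · rw [hψ1, hψs]; exact touches_symm (t1i i)
        · rw [hψs, hψs]; exact tij i j
    -- uniqueness: every vertex lies in at most one branch set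
    have d01 : ∀ w, w ∈ A ∪ {v₁} → w ∈ B → False := by
      rintro w (hw | hw) hwB
      · exact hABdisj w hw hwB
      · have : w = v₁ := hw
        subst this
        exact (hBc hwB) hv₁
    have d0i : ∀ w (i : Fin m), w ∈ A ∪ {v₁} → w ∈ ({f i} : Set V) → False := by
      rintro w i (hw | hw) hwf
      · have : w = f i := hwf
        subst this
        exact (hAc hw) (hfmem i).1
      · have h1 : w = v₁ := hw
        have h2 : w = f i := hwf
        exact (hfmem i).2 (h2 ▸ h1 ▸ rfl : f i = v₁)
    have d1i : ∀ w (i : Fin m), w ∈ B → w ∈ ({f i} : Set V) → False := by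
      rintro w i hw hwf
      have : w = f i := hwf
      subst this
      exact (hBc hw) (hfmem i).1
    have huniq : ∀ w : V, ∀ u u' : Fin (m + 2), w ∈ ψ u → w ∈ ψ u' → u = u' := by
      intro w u u' hu hu'
      rcases hcases u with rfl | rfl | ⟨i, rfl⟩ <;>
        rcases hcases u' with rfl | rfl | ⟨j, rfl⟩
      · rfl
      · rw [hψ0] at hu; rw [hψ1] at hu'; exact (d01 w hu hu').elim
      · rw [hψ0] at hu; rw [hψs] at hu'; exact (d0i w j hu hu').elim
      · rw [hψ1] at hu; rw [hψ0] at hu'; exact (d01 w hu' hu).elim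
      · rfl
      · rw [hψ1] at hu; rw [hψs] at hu'; exact (d1i w j hu hu').elim
      · rw [hψs] at hu; rw [hψ0] at hu'; exact (d0i w i hu' hu).elim
      · rw [hψs] at hu; rw [hψ1] at hu'; exact (d1i w i hu' hu).elim
      · rw [hψs] at hu; rw [hψs] at hu'
        have : f i = f j := (Set.mem_singleton_iff.mp hu).symm.trans hu'
        rw [hfinj this]
    have hwedle : wed H (m + 2) ψ ≤ 2 := by
      apply csSup_le'
      rintro d ⟨a, b, hab, rfl⟩
      exact aux_depth_le_two ψ huniq a b
    have h3 : 3 ≤ m + 2 := by omega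
    have hlt2 := hsmall (m + 2) ψ h3 hemb
    omega
end

section
/- Let H_gog be the goggles graph: the graph obtained from a 4-cycle on vertices a_1, a_2, a_3, a_4 and a 4-cycle on vertices b_1, b_2, b_3, b_4 by identifying a_1 with b_1 and adding the edge {a_3, b_3}. Then there exists a clique embedding ψ from K_4 to H_gog with wed(ψ) ≤ 2; consequently the clique embedding power of H_gog is at least 2. -/
/-- The *clique embedding power* `clemb(H) = sup_{k ≥ 3, ψ} k / wed(ψ)`. -/
noncomputable def clemb {V : Type*} (H : SimpleGraph V) : ℝ :=
  sSup {x : ℝ | ∃ (k : ℕ) (ψ : Fin k → Set V), 3 ≤ k ∧ IsCliqueEmbedding H k ψ ∧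
    x = (k : ℝ) / (wed H k ψ : ℝ)}

/-- The goggles graph: vertex `0` is the identified vertex `a₁ = b₁`, vertices
`1, 2, 3` are `a₂, a₃, a₄`, and vertices `4, 5, 6` are `b₂, b₃, b₄`; it consists of the
two 4-cycles `0-1-2-3-0` and `0-4-5-6-0` together with the extra edge `{2, 5}`
(i.e. `{a₃, b₃}`). -/
def goggles : SimpleGraph (Fin 7) :=
  SimpleGraph.fromRel fun x y =>
    (x, y) ∈ ([(0, 1), (1, 2), (2, 3), (3, 0), (0, 4), (4, 5), (5, 6), (6, 0), (2, 5)] :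
      List (Fin 7 × Fin 7))

instance gogglesAdjDec : DecidableRel goggles.Adj := fun a b => by
  unfold goggles
  rw [SimpleGraph.fromRel_adj]
  infer_instance

/-- The four branch sets of the clique embedding, as Finsets. -/
def Fsets : Fin 4 → Finset (Fin 7) := ![{2}, {5}, {0, 1, 4}, {0, 3, 6}]

/-- The clique embedding `K₄ → H_gog`. -/
def ψ₀ : Fin 4 → Set (Fin 7) := fun u => ↑(Fsets u)

lemma wd_eq (a b : Fin 7) :
    weakDepth 4 ψ₀ a b
      = (Finset.univ.filter (fun u : Fin 4 => a ∈ Fsets u ∨ b ∈ Fsets u)).card := by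
  rw [weakDepth, Nat.card_congr (Equiv.subtypeEquivRight (q := fun u => a ∈ Fsets u ∨ b ∈ Fsets u)
    (by intro u; simp [ψ₀]))]
  rw [Nat.card_eq_fintype_card, Fintype.card_subtype]

lemma conn_aux {V : Type*} (G : SimpleGraph V) (s : Finset V) (hub : V) (hhub : hub ∈ s)
    (h : ∀ v ∈ s, v = hub ∨ G.Adj v hub) : (G.induce (↑s : Set V)).Connected := by
  rw [SimpleGraph.connected_iff]
  have key : ∀ z : (↑s : Set V),
      (G.induce (↑s : Set V)).Reachable z ⟨hub, by simpa using hhub⟩ := by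
    intro z
    rcases h z.1 (by simpa using z.2) with h1 | h2
    · rw [show z = ⟨hub, by simpa using hhub⟩ from Subtype.ext h1]
    · exact SimpleGraph.Adj.reachable h2
  exact ⟨fun x y => (key x).trans (key y).symm, ⟨⟨hub, by simpa using hhub⟩⟩⟩

lemma emb₀ : IsCliqueEmbedding goggles 4 ψ₀ := by
  constructor
  · intro u
    fin_cases u
    · exact ⟨2, by simp [ψ₀, Fsets]⟩
    · exact ⟨5, by simp [ψ₀, Fsets]⟩
    · exact ⟨0, by simp [ψ₀, Fsets]⟩
    · exact ⟨0, by simp [ψ₀, Fsets]⟩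
  · intro u
    fin_cases u
    · exact conn_aux goggles (Fsets 0) 2 (by decide) (by decide)
    · exact conn_aux goggles (Fsets 1) 5 (by decide) (by decide)
    · exact conn_aux goggles (Fsets 2) 0 (by decide) (by decide)
    · exact conn_aux goggles (Fsets 3) 0 (by decide) (by decide)
  · intro u v
    have h : ∀ u v : Fin 4, (Fsets u ∩ Fsets v).Nonempty ∨
        ∃ a ∈ Fsets u, ∃ b ∈ Fsets v, goggles.Adj a b := by decide
    rcases h u v with ⟨x, hx⟩ | ⟨a, ha, b, hb, hab⟩
    · exact Or.inl ⟨x, by simpa [ψ₀] using hx⟩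
    · exact Or.inr ⟨a, by simpa [ψ₀] using ha, b, by simpa [ψ₀] using hb, hab⟩

lemma wed_le' : wed goggles 4 ψ₀ ≤ 2 := by
  apply csSup_le'
  rintro d ⟨a, b, hab, rfl⟩
  rw [wd_eq]
  exact (by decide : ∀ a b : Fin 7, goggles.Adj a b →
    (Finset.univ.filter (fun u : Fin 4 => a ∈ Fsets u ∨ b ∈ Fsets u)).card ≤ 2) a b hab

lemma wed_ge' : 2 ≤ wed goggles 4 ψ₀ := by
  have hbdd : BddAbove {d : ℕ | ∃ a b : Fin 7, goggles.Adj a b ∧ d = weakDepth 4 ψ₀ a b} := by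
    refine ⟨4, ?_⟩
    rintro d ⟨a, b, _, rfl⟩
    rw [wd_eq]
    exact le_trans (Finset.card_filter_le _ _) (by simp)
  exact le_csSup hbdd ⟨2, 5, by decide, by rw [wd_eq]; decide⟩

lemma wed_eq' : wed goggles 4 ψ₀ = 2 := le_antisymm wed_le' wed_ge'

open Finset in
/-- For any clique embedding into goggles, `k ≤ 7 * wed`. -/
lemma key_bound (k : ℕ) (ψ : Fin k → Set (Fin 7)) (h : IsCliqueEmbedding goggles k ψ) :
    k ≤ 7 * wed goggles k ψ := by
  classical
  choose f hf using h.nonempty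
  have hsum : ∑ v : Fin 7, (univ.filter (fun u : Fin k => f u = v)).card = k := by
    rw [← Finset.card_eq_sum_card_fiberwise (fun u _ => Finset.mem_univ (f u))]
    simp
  have hex : ∃ v : Fin 7, k ≤ 7 * (univ.filter (fun u : Fin k => f u = v)).card := by
    have := Finset.exists_le_of_sum_le (f := fun _ : Fin 7 => k)
      (g := fun v : Fin 7 => 7 * (univ.filter (fun u : Fin k => f u = v)).card)
      (Finset.univ_nonempty)
      (by rw [← Finset.mul_sum, hsum]; simp [Finset.sum_const, smul_eq_mul, mul_comm])
    obtain ⟨v, _, hv⟩ := this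
    exact ⟨v, hv⟩
  obtain ⟨v, hv⟩ := hex
  obtain ⟨w, hw⟩ := (by decide : ∀ v : Fin 7, ∃ w, goggles.Adj v w) v
  have h1 : (univ.filter (fun u : Fin k => f u = v)).card ≤ weakDepth k ψ v w := by
    rw [weakDepth, ← Fintype.card_subtype, ← Nat.card_eq_fintype_card]
    apply Nat.card_le_card_of_injective
      (fun x : {u : Fin k // f u = v} =>
        (⟨x.1, Or.inl (by have := hf x.1; rwa [x.2] at this)⟩ :
          {u : Fin k // v ∈ ψ u ∨ w ∈ ψ u}))
    intro x y hxy
    simp only [Subtype.mk.injEq] at hxy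
    exact Subtype.ext hxy
  have h2 : weakDepth k ψ v w ≤ wed goggles k ψ := by
    apply le_csSup
    · refine ⟨k, ?_⟩
      rintro d ⟨a, b, _, rfl⟩
      rw [weakDepth]
      calc Nat.card {u : Fin k // a ∈ ψ u ∨ b ∈ ψ u} ≤ Nat.card (Fin k) :=
            Nat.card_le_card_of_injective (Subtype.val) Subtype.val_injective
        _ = k := by simp
    · exact ⟨v, w, hw, rfl⟩
  omega

/-- There is a clique embedding `ψ : K₄ → H_gog` with `wed(ψ) ≤ 2`;
consequently the clique embedding power of the goggles graph is at least `2`. -/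
theorem stmt_2 :
    (∃ ψ : Fin 4 → Set (Fin 7), IsCliqueEmbedding goggles 4 ψ ∧ wed goggles 4 ψ ≤ 2) ∧
    (2 : ℝ) ≤ clemb goggles := by
  have hwed : wed goggles 4 ψ₀ = 2 := wed_eq'
  refine ⟨⟨ψ₀, emb₀, wed_le'⟩, ?_⟩
  have hmem : (2 : ℝ) ∈ {x : ℝ | ∃ (k : ℕ) (ψ : Fin k → Set (Fin 7)), 3 ≤ k ∧
      IsCliqueEmbedding goggles k ψ ∧ x = (k : ℝ) / (wed goggles k ψ : ℝ)} :=
    ⟨4, ψ₀, by norm_num, emb₀, by rw [hwed]; norm_num⟩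
  refine le_csSup ⟨7, ?_⟩ hmem
  rintro x ⟨k, ψ, hk, hemb, rfl⟩
  have hb := key_bound k ψ hemb
  have hwpos : 0 < wed goggles k ψ := by omega
  rw [div_le_iff₀ (by exact_mod_cast hwpos)]
  exact_mod_cast hb
end

section
/- Let H and H' be pattern graphs such that H' is an induced minor of H. Then for every integer k ≥ 3 and every clique embedding ψ' from K_k to H' there exists a clique embedding ψ from K_k to H with wed(ψ) ≤ wed(ψ'). In particular, the clique embedding power of H is at least the clique embedding power of H'. -/
/-- `H'` is an *induced minor* of `H`: there is a map `φ` assigning to every vertex `x`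
of `H'` a nonempty connected subset `φ x ⊆ V(H)`, the sets `φ x` are pairwise disjoint,
and for distinct `x, y`, `{x,y}` is an edge of `H'` iff there is an edge of `H` between
`φ x` and `φ y`. -/
def IsInducedMinor {V V' : Type*} (H : SimpleGraph V) (H' : SimpleGraph V') : Prop :=
  ∃ φ : V' → Set V,
    (∀ x, (φ x).Nonempty) ∧
    (∀ x, (H.induce (φ x)).Connected) ∧
    (∀ x y, x ≠ y → Disjoint (φ x) (φ y)) ∧
    (∀ x y, x ≠ y → (H'.Adj x y ↔ ∃ a ∈ φ x, ∃ b ∈ φ y, H.Adj a b))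


open SimpleGraph

private lemma natSSup_le {s : Set ℕ} {n : ℕ} (h : ∀ m ∈ s, m ≤ n) : sSup s ≤ n := by
  rcases s.eq_empty_or_nonempty with rfl | hs
  · simp
  · exact csSup_le hs h

private lemma exists_adj {V : Type*} [Fintype V] {H : SimpleGraph V}
    (hc : H.Connected) (h2 : 2 ≤ Fintype.card V) (v : V) : ∃ w, H.Adj v w := by
  obtain ⟨w, hw⟩ := Fintype.exists_ne_of_one_lt_card (by omega) v
  obtain ⟨p⟩ := hc.preconnected v w
  cases p with
  | nil => exact absurd rfl (Ne.symm hw)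
  | cons h p => exact ⟨_, h⟩

private lemma reach_mono {V : Type*} (H : SimpleGraph V) {s t : Set V} (hst : s ⊆ t)
    {a b : V} (ha : a ∈ s) (hb : b ∈ s)
    (hr : (H.induce s).Reachable ⟨a, ha⟩ ⟨b, hb⟩) :
    (H.induce t).Reachable ⟨a, hst ha⟩ ⟨b, hst hb⟩ := by
  let f : H.induce s →g H.induce t := ⟨fun v => ⟨v.1, hst v.2⟩, fun h => h⟩
  exact hr.map f

private lemma connected_biUnion {V V' : Type*} {H : SimpleGraph V} {H' : SimpleGraph V'}
    {φ : V' → Set V} (hne : ∀ x, (φ x).Nonempty)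
    (hconn : ∀ x, (H.induce (φ x)).Connected)
    (hadj : ∀ x y, H'.Adj x y → ∃ a ∈ φ x, ∃ b ∈ φ y, H.Adj a b)
    (s : Set V') (hs : (H'.induce s).Connected) :
    (H.induce (⋃ x ∈ s, φ x)).Connected := by
  set S : Set V := ⋃ x ∈ s, φ x with hS
  have hsub : ∀ x ∈ s, φ x ⊆ S := fun x hx => Set.subset_biUnion_of_mem hx
  have key : ∀ (x y : s), (H'.induce s).Walk x y →
      ∀ a b, a ∈ φ x.1 → b ∈ φ y.1 →
      ∀ (haS : a ∈ S) (hbS : b ∈ S), (H.induce S).Reachable ⟨a, haS⟩ ⟨b, hbS⟩ := by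
    intro x y w
    induction w with
    | @nil z =>
      intro a b ha hb haS hbS
      exact reach_mono H (hsub _ z.2) ha hb
        ((hconn z.1).preconnected ⟨a, ha⟩ ⟨b, hb⟩)
    | @cons x' z y' h p ih =>
      intro a b ha hb haS hbS
      have h' : H'.Adj x'.1 z.1 := h
      obtain ⟨a', ha', b', hb', hab⟩ := hadj _ _ h'
      have ha'S : a' ∈ S := hsub _ x'.2 ha'
      have hb'S : b' ∈ S := hsub _ z.2 hb'
      have r1 : (H.induce S).Reachable ⟨a, haS⟩ ⟨a', ha'S⟩ :=
        reach_mono H (hsub _ x'.2) ha ha' ((hconn x'.1).preconnected ⟨a, ha⟩ ⟨a', ha'⟩)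
      have r2 : (H.induce S).Adj ⟨a', ha'S⟩ ⟨b', hb'S⟩ := hab
      exact (r1.trans r2.reachable).trans (ih b' b hb' hb hb'S hbS)
  have hne' : Nonempty S := by
    have : Nonempty s := hs.nonempty
    obtain ⟨x, hx⟩ := this
    obtain ⟨a, ha⟩ := hne x
    exact ⟨⟨a, hsub _ hx ha⟩⟩
  refine ⟨?_⟩
  rintro ⟨a, haS⟩ ⟨b, hbS⟩
  obtain ⟨x, hx, ha⟩ := Set.mem_iUnion₂.mp haS
  obtain ⟨y, hy, hb⟩ := Set.mem_iUnion₂.mp hbS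
  obtain ⟨w⟩ := hs.preconnected ⟨x, hx⟩ ⟨y, hy⟩
  exact key ⟨x, hx⟩ ⟨y, hy⟩ w a b ha hb haS hbS

private lemma weakDepth_le_k {V : Type*} (k : ℕ) (ψ : Fin k → Set V) (a b : V) :
    weakDepth k ψ a b ≤ k := by
  have := Nat.card_le_card_of_injective (fun u : {u : Fin k // a ∈ ψ u ∨ b ∈ ψ u} => u.1)
    (fun u v h => Subtype.ext h)
  simpa [weakDepth] using this

private lemma wed_bddAbove {V : Type*} (H : SimpleGraph V) (k : ℕ) (ψ : Fin k → Set V) :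
    BddAbove {d : ℕ | ∃ a b : V, H.Adj a b ∧ d = weakDepth k ψ a b} := by
  refine ⟨k, fun d hd => ?_⟩
  obtain ⟨a, b, _, rfl⟩ := hd
  exact weakDepth_le_k k ψ a b

private lemma weakDepth_le_wed {V : Type*} {H : SimpleGraph V} {k : ℕ} {ψ : Fin k → Set V}
    {a b : V} (h : H.Adj a b) : weakDepth k ψ a b ≤ wed H k ψ :=
  le_csSup (wed_bddAbove H k ψ) ⟨a, b, h, rfl⟩

private lemma weakDepth_mono {V W : Type*} {k : ℕ} {ψ : Fin k → Set V} {ψ' : Fin k → Set W}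
    {a b : V} {a' b' : W}
    (h : ∀ u, (a ∈ ψ u ∨ b ∈ ψ u) → (a' ∈ ψ' u ∨ b' ∈ ψ' u)) :
    weakDepth k ψ a b ≤ weakDepth k ψ' a' b' :=
  Nat.card_le_card_of_injective
    (fun u => ⟨u.1, h u.1 u.2⟩) (fun u v huv => Subtype.ext (by simpa using huv))

private lemma wed_pos {V : Type*} [Fintype V] {H : SimpleGraph V}
    (hc : H.Connected) (h2 : 2 ≤ Fintype.card V) {k : ℕ} {ψ : Fin k → Set V}
    (hψ : IsCliqueEmbedding H k ψ) (hk : 1 ≤ k) : 1 ≤ wed H k ψ := by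
  have u0 : Fin k := ⟨0, by omega⟩
  obtain ⟨a, ha⟩ := hψ.nonempty u0
  obtain ⟨b, hb⟩ := exists_adj hc h2 a
  have h1 : 1 ≤ weakDepth k ψ a b := by
    have : Nonempty {u : Fin k // a ∈ ψ u ∨ b ∈ ψ u} := ⟨⟨u0, Or.inl ha⟩⟩
    exact Nat.one_le_iff_ne_zero.mpr (Nat.card_ne_zero.mpr ⟨this, inferInstance⟩)
  exact h1.trans (weakDepth_le_wed hb)

/-- Every value in the clemb set is at most the number of vertices. -/
private lemma clemb_set_bdd {V : Type*} [Fintype V] {H : SimpleGraph V}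
    (hc : H.Connected) (h2 : 2 ≤ Fintype.card V) {k : ℕ} {ψ : Fin k → Set V}
    (hk : 3 ≤ k) (hψ : IsCliqueEmbedding H k ψ) :
    (k : ℝ) / (wed H k ψ : ℝ) ≤ (Fintype.card V : ℝ) := by
  classical
  set f : Fin k → V := fun u => (hψ.nonempty u).choose with hf
  have hfmem : ∀ u, f u ∈ ψ u := fun u => (hψ.nonempty u).choose_spec
  have hkey : k ≤ Fintype.card V * wed H k ψ := by
    have hcard : k = ∑ v : V, (Finset.univ.filter (fun u => f u = v)).card := by
      simpa using Finset.card_eq_sum_card_fiberwise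
        (f := f) (s := Finset.univ) (t := Finset.univ) (fun x _ => Finset.mem_univ _)
    have hfib : ∀ v : V, (Finset.univ.filter (fun u => f u = v)).card ≤ wed H k ψ := by
      intro v
      obtain ⟨w, hw⟩ := exists_adj hc h2 v
      have : (Finset.univ.filter (fun u => f u = v)).card
          = Nat.card {u : Fin k // f u = v} := by
        rw [Nat.card_eq_fintype_card, Fintype.card_subtype]
      rw [this]
      have h1 : Nat.card {u : Fin k // f u = v} ≤ weakDepth k ψ v w :=
        Nat.card_le_card_of_injective
          (fun u => ⟨u.1, Or.inl (by have := hfmem u.1; rwa [u.2] at this)⟩)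
          (fun u v huv => Subtype.ext (by simpa using huv))
      exact h1.trans (weakDepth_le_wed hw)
    calc k = ∑ v : V, (Finset.univ.filter (fun u => f u = v)).card := hcard
      _ ≤ ∑ _v : V, wed H k ψ := Finset.sum_le_sum (fun v _ => hfib v)
      _ = Fintype.card V * wed H k ψ := by simp [Finset.sum_const, Finset.card_univ]
  have hwpos : 0 < wed H k ψ := wed_pos hc h2 hψ (by omega)
  rw [div_le_iff₀ (by exact_mod_cast hwpos)]
  exact_mod_cast hkey.trans (by nlinarith [hwpos])

private lemma univ_embedding {V : Type*} [Fintype V] {H : SimpleGraph V}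
    (hc : H.Connected) (h2 : 2 ≤ Fintype.card V) (k : ℕ) :
    IsCliqueEmbedding H k (fun _ => (Set.univ : Set V)) := by
  have : Nonempty V := Fintype.card_pos_iff.mp (by omega)
  refine ⟨fun u => Set.univ_nonempty, fun u => ?_, fun u v => Or.inl (by simp)⟩
  exact (Iso.connected_iff (induceUnivIso H)).mpr hc

private lemma clemb_nonneg {V : Type*} [Fintype V] {H : SimpleGraph V}
    (hc : H.Connected) (h2 : 2 ≤ Fintype.card V) : 0 ≤ clemb H := by
  have hb : BddAbove {x : ℝ | ∃ (k : ℕ) (ψ : Fin k → Set V), 3 ≤ k ∧ IsCliqueEmbedding H k ψ ∧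
      x = (k : ℝ) / (wed H k ψ : ℝ)} := by
    refine ⟨(Fintype.card V : ℝ), fun x hx => ?_⟩
    obtain ⟨k, ψ, hk, hψ, rfl⟩ := hx
    exact clemb_set_bdd hc h2 hk hψ
  have hmem : (3 : ℝ) / (wed H 3 (fun _ => (Set.univ : Set V)) : ℝ) ∈
      {x : ℝ | ∃ (k : ℕ) (ψ : Fin k → Set V), 3 ≤ k ∧ IsCliqueEmbedding H k ψ ∧
      x = (k : ℝ) / (wed H k ψ : ℝ)} := ⟨3, _, le_refl 3, univ_embedding hc h2 3, rfl⟩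
  have := le_csSup hb hmem
  exact le_trans (by positivity) this

/-- If `H'` is an induced minor of `H` (both pattern graphs), then for
every `k ≥ 3` every clique embedding `ψ' : K_k → H'` yields a clique embedding
`ψ : K_k → H` with `wed(ψ) ≤ wed(ψ')`; in particular `clemb(H) ≥ clemb(H')`. -/
theorem stmt_3 {V V' : Type*} [Fintype V] [Fintype V']
    (H : SimpleGraph V) (H' : SimpleGraph V')
    (hHconn : H.Connected) (hHcard : 2 ≤ Fintype.card V)
    (hH'conn : H'.Connected) (hH'card : 2 ≤ Fintype.card V')
    (hminor : IsInducedMinor H H') :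
    (∀ (k : ℕ) (ψ' : Fin k → Set V'), 3 ≤ k → IsCliqueEmbedding H' k ψ' →
      ∃ ψ : Fin k → Set V, IsCliqueEmbedding H k ψ ∧ wed H k ψ ≤ wed H' k ψ') ∧
    clemb H' ≤ clemb H := by
  obtain ⟨φ, hφne, hφconn, hφdisj, hφadj⟩ := hminor
  have hadj' : ∀ x y, H'.Adj x y → ∃ a ∈ φ x, ∃ b ∈ φ y, H.Adj a b := by
    intro x y h
    exact (hφadj x y h.ne).mp h
  have main : ∀ (k : ℕ) (ψ' : Fin k → Set V'), 3 ≤ k → IsCliqueEmbedding H' k ψ' →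
      ∃ ψ : Fin k → Set V, IsCliqueEmbedding H k ψ ∧ wed H k ψ ≤ wed H' k ψ' := by
    intro k ψ' hk hψ'
    refine ⟨fun u => ⋃ x ∈ ψ' u, φ x, ⟨?_, ?_, ?_⟩, ?_⟩
    · intro u
      obtain ⟨x, hx⟩ := hψ'.nonempty u
      obtain ⟨a, ha⟩ := hφne x
      exact ⟨a, Set.mem_biUnion hx ha⟩
    · intro u
      exact connected_biUnion hφne hφconn hadj' (ψ' u) (hψ'.connected u)
    · intro u v
      rcases hψ'.touches u v with ⟨x, hxu, hxv⟩ | ⟨x, hx, y, hy, hxy⟩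
      · obtain ⟨a, ha⟩ := hφne x
        exact Or.inl ⟨a, Set.mem_biUnion hxu ha, Set.mem_biUnion hxv ha⟩
      · obtain ⟨a, ha, b, hb, hab⟩ := hadj' x y hxy
        exact Or.inr ⟨a, Set.mem_biUnion hx ha, b, Set.mem_biUnion hy hb, hab⟩
    · -- wed bound
      set ψ : Fin k → Set V := fun u => ⋃ x ∈ ψ' u, φ x with hψdef
      refine natSSup_le ?_
      rintro d ⟨a, b, hab, rfl⟩
      -- membership characterization
      have hmem : ∀ (c : V) (u : Fin k), c ∈ ψ u ↔ ∃ x ∈ ψ' u, c ∈ φ x := by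
        intro c u; simp [hψdef]
      have huniq : ∀ {c : V} {x y : V'}, c ∈ φ x → c ∈ φ y → x = y := by
        intro c x y hx hy
        by_contra hne
        exact (hφdisj x y hne).ne_of_mem hx hy rfl
      have key : ∃ x y : V', H'.Adj x y ∧
          ∀ u, (a ∈ ψ u ∨ b ∈ ψ u) → (x ∈ ψ' u ∨ y ∈ ψ' u) := by
        by_cases h1 : ∃ x, a ∈ φ x
        · obtain ⟨x, hx⟩ := h1
          by_cases h2 : ∃ y, b ∈ φ y
          · obtain ⟨y, hy⟩ := h2
            by_cases hxy : x = y
            · subst hxy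
              obtain ⟨z, hz⟩ := exists_adj hH'conn hH'card x
              refine ⟨x, z, hz, ?_⟩
              rintro u (hu | hu)
              · obtain ⟨x', hx', hc⟩ := (hmem _ u).mp hu
                exact Or.inl (by rwa [huniq hc hx] at hx')
              · obtain ⟨x', hx', hc⟩ := (hmem _ u).mp hu
                exact Or.inl (by rwa [huniq hc hy] at hx')
            · refine ⟨x, y, (hφadj x y hxy).mpr ⟨a, hx, b, hy, hab⟩, ?_⟩
              rintro u (hu | hu)
              · obtain ⟨x', hx', hc⟩ := (hmem _ u).mp hu
                exact Or.inl (by rwa [huniq hc hx] at hx')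
              · obtain ⟨y', hy', hc⟩ := (hmem _ u).mp hu
                exact Or.inr (by rwa [huniq hc hy] at hy')
          · obtain ⟨z, hz⟩ := exists_adj hH'conn hH'card x
            refine ⟨x, z, hz, ?_⟩
            rintro u (hu | hu)
            · obtain ⟨x', hx', hc⟩ := (hmem _ u).mp hu
              exact Or.inl (by rwa [huniq hc hx] at hx')
            · obtain ⟨y', _, hc⟩ := (hmem _ u).mp hu
              exact absurd ⟨y', hc⟩ h2
        · by_cases h2 : ∃ y, b ∈ φ y
          · obtain ⟨y, hy⟩ := h2
            obtain ⟨z, hz⟩ := exists_adj hH'conn hH'card y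
            refine ⟨y, z, hz, ?_⟩
            rintro u (hu | hu)
            · obtain ⟨x', _, hc⟩ := (hmem _ u).mp hu
              exact absurd ⟨x', hc⟩ h1
            · obtain ⟨y', hy', hc⟩ := (hmem _ u).mp hu
              exact Or.inl (by rwa [huniq hc hy] at hy')
          · have : Nonempty V' := Fintype.card_pos_iff.mp (by omega)
            obtain ⟨x⟩ := this
            obtain ⟨z, hz⟩ := exists_adj hH'conn hH'card x
            refine ⟨x, z, hz, ?_⟩
            rintro u (hu | hu)
            · obtain ⟨x', _, hc⟩ := (hmem _ u).mp hu
              exact absurd ⟨x', hc⟩ h1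
            · obtain ⟨y', _, hc⟩ := (hmem _ u).mp hu
              exact absurd ⟨y', hc⟩ h2
      obtain ⟨x, y, hxy, hsub⟩ := key
      exact le_trans (weakDepth_mono hsub) (weakDepth_le_wed (ψ := ψ') hxy)
  refine ⟨main, ?_⟩
  have hbH : BddAbove {x : ℝ | ∃ (k : ℕ) (ψ : Fin k → Set V), 3 ≤ k ∧ IsCliqueEmbedding H k ψ ∧
      x = (k : ℝ) / (wed H k ψ : ℝ)} := by
    refine ⟨(Fintype.card V : ℝ), fun x hx => ?_⟩
    obtain ⟨k, ψ, hk, hψ, rfl⟩ := hx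
    exact clemb_set_bdd hHconn hHcard hk hψ
  refine Real.sSup_le ?_ (clemb_nonneg hHconn hHcard)
  rintro x ⟨k, ψ', hk, hψ', rfl⟩
  obtain ⟨ψ, hψ, hwed⟩ := main k ψ' hk hψ'
  have hwpos : 0 < wed H k ψ := wed_pos hHconn hHcard hψ (by omega)
  have hle : (k : ℝ) / (wed H' k ψ' : ℝ) ≤ (k : ℝ) / (wed H k ψ : ℝ) := by
    apply div_le_div_of_nonneg_left (by positivity) (by exact_mod_cast hwpos)
    exact_mod_cast hwed
  exact hle.trans (le_csSup hbH ⟨k, ψ, hk, hψ, rfl⟩)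
end

section
/- For every triple (α, β, γ) ∈ P', the value F(α, β, γ) of the savings function is a positive integer (i.e., the rational number F(α, β, γ) lies in ℤ and is ≥ 1). -/
/-- The savings function `F(α, β, γ)`, a rational number defined by the eight cases of
the paper (the cases are pairwise disjoint and cover all triples of nonnegative
integers). -/
def F (α β γ : ℕ) : ℚ :=
  let a : ℚ := α
  let b : ℚ := β
  let c : ℚ := γ
  if Even (α + β) ∧ β < α ∧ β < γ + 2 then
    2 * b * c + a * b / 2 - b ^ 2 / 2 + b / 2 - a / 2 - 2 * c + 2
  else if Even (α + β) ∧ 3 * β < α + 6 * γ + 8 ∧ (α = β ∨ γ + 2 ≤ β) then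
    2 * b * c + a * b / 2 - b ^ 2 / 2 + 3 * b / 2 - a / 2 - 3 * c
  else if Even (α + β) ∧ 2 * β ≤ α + 4 * γ + 6 ∧ α + 6 * γ + 8 ≤ 3 * β then
    2 * b * c + a * b / 2 - b ^ 2 / 2 + 3 * b - a - 6 * c - 4
  else if Odd (α + β) ∧ β < 2 * γ + 3 then
    2 * b * c + a * b / 2 - b ^ 2 / 2 + b - a / 2 - 2 * c + 3 / 2
  else if Odd (α + β) ∧ 2 * β ≤ α + 4 * γ + 6 ∧ 2 * γ + 3 ≤ β then
    2 * b * c + a * b / 2 - b ^ 2 / 2 + 2 * b - a / 2 - 4 * c - 3 / 2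
  else if α % 4 = 0 ∧ α + 4 * γ + 6 < 2 * β then
    2 * c ^ 2 + a * c + a ^ 2 / 8 + a / 2
  else if Odd α ∧ α + 4 * γ + 6 < 2 * β then
    2 * c ^ 2 + a * c + a ^ 2 / 8 + a / 2 + 3 / 8
  else if α % 4 = 2 ∧ α + 4 * γ + 6 < 2 * β then
    2 * c ^ 2 + a * c + a ^ 2 / 8 + a / 2 + 1 / 2
  else 0

/-- Membership of a triple in the set `P'` of parameters of simple patterns:
`{(a,b,c) : a >= b >= 2, c >= 1} u {(k-2,2,0) : k >= 4} u {(1,0,0)} u {(2,1,0)}`. -/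
def memP' (α β γ : ℕ) : Prop :=
  (2 ≤ β ∧ β ≤ α ∧ 1 ≤ γ) ∨
  (∃ k : ℕ, 4 ≤ k ∧ α = k - 2 ∧ β = 2 ∧ γ = 0) ∨
  (α = 1 ∧ β = 0 ∧ γ = 0) ∨
  (α = 2 ∧ β = 1 ∧ γ = 0)

set_option maxHeartbeats 1600000 in
/-- For every `(α, β, γ) ∈ P'`, the value `F(α, β, γ)` is a positive
integer. -/
theorem stmt_12 (α β γ : ℕ) (h : memP' α β γ) :
    ∃ n : ℕ, 1 ≤ n ∧ F α β γ = n := by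
  have hba : β ≤ α := by
    rcases h with ⟨h1, h2, h3⟩ | ⟨k, hk, rfl, rfl, rfl⟩ | ⟨rfl, rfl, rfl⟩ | ⟨rfl, rfl, rfl⟩ <;> omega
  have ha1 : 1 ≤ α := by
    rcases h with ⟨h1, h2, h3⟩ | ⟨k, hk, rfl, rfl, rfl⟩ | ⟨rfl, rfl, rfl⟩ | ⟨rfl, rfl, rfl⟩ <;> omega
  have hsp : β = 0 → α = 1 ∧ γ = 0 := by
    rcases h with ⟨h1, h2, h3⟩ | ⟨k, hk, rfl, rfl, rfl⟩ | ⟨rfl, rfl, rfl⟩ | ⟨rfl, rfl, rfl⟩ <;> omega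
  have hev : (α + β) % 2 = 0 → 2 ≤ β := by
    rcases h with ⟨h1, h2, h3⟩ | ⟨k, hk, rfl, rfl, rfl⟩ | ⟨rfl, rfl, rfl⟩ | ⟨rfl, rfl, rfl⟩ <;> omega
  have hmain : ∃ z : ℤ, 1 ≤ z ∧ F α β γ = z := by
    unfold F
    dsimp only
    split_ifs with h1 h2 h3 h4 h5 h6 h7 h8
    · -- case 1
      obtain ⟨m, hm⟩ := h1.1
      have hb2 : 2 ≤ β := hev (by omega)
      have hbm : β < m := by omega
      refine ⟨2 * γ * (β - 1) + (m - β) * (β - 1) + 2, ?_, ?_⟩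
      · have t1 : (0:ℤ) ≤ 2 * (γ:ℤ) * ((β:ℤ) - 1) :=
          mul_nonneg (by positivity) (by omega)
        have t2 : (0:ℤ) ≤ ((m:ℤ) - β) * ((β:ℤ) - 1) :=
          mul_nonneg (by omega) (by omega)
        linarith
      · have hα : (α : ℚ) = 2 * m - β := by
          have : (α : ℚ) + β = m + m := by exact_mod_cast congrArg (Nat.cast : ℕ → ℚ) hm
          linarith
        push_cast
        rw [hα]; ring
    · -- case 2
      obtain ⟨m, hm⟩ := h2.1
      have hb2 : 2 ≤ β := hev (by omega)
      have hbm : β ≤ m := by omega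
      refine ⟨γ * (2 * β - 3) + (m - β) * (β - 1) + β, ?_, ?_⟩
      · have t1 : (0:ℤ) ≤ (γ:ℤ) * (2 * (β:ℤ) - 3) := mul_nonneg (by positivity) (by omega)
        have t2 : (0:ℤ) ≤ ((m:ℤ) - β) * ((β:ℤ) - 1) := mul_nonneg (by omega) (by omega)
        have : (2:ℤ) ≤ (β:ℤ) := by exact_mod_cast hb2
        linarith
      · have hα : (α : ℚ) = 2 * m - β := by
          have : (α : ℚ) + β = m + m := by exact_mod_cast congrArg (Nat.cast : ℕ → ℚ) hm
          linarith
        push_cast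
        rw [hα]; ring
    · -- case 3
      obtain ⟨m, hm⟩ := h3.1
      have hbm : β ≤ m := by omega
      have hkey : 2 * m + 6 * γ + 8 ≤ 4 * β := by omega
      refine ⟨2 * β * γ + β * (m - β) + 4 * β - 2 * m - 6 * γ - 4, ?_, ?_⟩
      · have t1 : (0:ℤ) ≤ 2 * (β:ℤ) * γ := by positivity
        have t2 : (0:ℤ) ≤ (β:ℤ) * ((m:ℤ) - β) := mul_nonneg (by positivity) (by omega)
        have : 2 * (m:ℤ) + 6 * γ + 8 ≤ 4 * β := by exact_mod_cast hkey
        linarith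
      · have hα : (α : ℚ) = 2 * m - β := by
          have : (α : ℚ) + β = m + m := by exact_mod_cast congrArg (Nat.cast : ℕ → ℚ) hm
          linarith
        push_cast
        rw [hα]; ring
    · -- case 4
      obtain ⟨m, hm⟩ := h4.1
      have hbm : β ≤ m := by omega
      refine ⟨2 * γ * (β - 1) + (β - 1) * (m - β) + β + 1, ?_, ?_⟩
      · rcases Nat.eq_zero_or_pos β with hb0 | hb1
        · obtain ⟨ha, hg⟩ := hsp hb0
          subst ha hg hb0
          have : m = 0 := by omega
          subst this
          norm_num
        · have t1 : (0:ℤ) ≤ 2 * (γ:ℤ) * ((β:ℤ) - 1) :=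
            mul_nonneg (by positivity) (by omega)
          have t2 : (0:ℤ) ≤ ((β:ℤ) - 1) * ((m:ℤ) - β) := mul_nonneg (by omega) (by omega)
          have : (1:ℤ) ≤ (β:ℤ) := by exact_mod_cast hb1
          linarith
      · have hα : (α : ℚ) = 2 * m + 1 - β := by
          have : (α : ℚ) + β = 2 * m + 1 := by exact_mod_cast congrArg (Nat.cast : ℕ → ℚ) hm
          linarith
        push_cast
        rw [hα]; ring
    · -- case 5
      obtain ⟨m, hm⟩ := h5.1
      have hb3 : 3 ≤ β := by omega
      have hbm : β ≤ m := by omega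
      refine ⟨(β - 1) * (m - β) + 2 * γ * (β - 2) + 2 * (β - 1), ?_, ?_⟩
      · have t1 : (0:ℤ) ≤ ((β:ℤ) - 1) * ((m:ℤ) - β) := mul_nonneg (by omega) (by omega)
        have t2 : (0:ℤ) ≤ 2 * (γ:ℤ) * ((β:ℤ) - 2) := mul_nonneg (by positivity) (by omega)
        have : (3:ℤ) ≤ (β:ℤ) := by exact_mod_cast hb3
        linarith
      · have hα : (α : ℚ) = 2 * m + 1 - β := by
          have : (α : ℚ) + β = 2 * m + 1 := by exact_mod_cast congrArg (Nat.cast : ℕ → ℚ) hm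
          linarith
        push_cast
        rw [hα]; ring
    · -- case 6
      obtain ⟨t, ht⟩ : ∃ t, α = 4 * t := ⟨α / 4, by omega⟩
      have ht1 : 1 ≤ t := by omega
      refine ⟨2 * γ ^ 2 + α * γ + 2 * t ^ 2 + 2 * t, ?_, ?_⟩
      · have : (1:ℤ) ≤ (t:ℤ) := by exact_mod_cast ht1
        nlinarith [sq_nonneg ((γ:ℤ)), sq_nonneg ((t:ℤ)), mul_nonneg (Int.ofNat_nonneg α) (Int.ofNat_nonneg γ)]
      · have hα : (α : ℚ) = 4 * t := by exact_mod_cast congrArg (Nat.cast : ℕ → ℚ) ht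
        push_cast
        rw [hα]; ring
    · -- case 7
      rcases Nat.odd_mod_four_iff.mp (Nat.odd_iff.mp h7.1) with h14 | h34
      · obtain ⟨u, hu⟩ : ∃ u, α = 4 * u + 1 := ⟨α / 4, by omega⟩
        refine ⟨2 * γ ^ 2 + α * γ + 2 * u ^ 2 + 3 * u + 1, ?_, ?_⟩
        · nlinarith [sq_nonneg ((γ:ℤ)), sq_nonneg ((u:ℤ)), mul_nonneg (Int.ofNat_nonneg α) (Int.ofNat_nonneg γ), Int.ofNat_nonneg u]
        · have hα : (α : ℚ) = 4 * u + 1 := by exact_mod_cast congrArg (Nat.cast : ℕ → ℚ) hu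
          push_cast
          rw [hα]; ring
      · obtain ⟨u, hu⟩ : ∃ u, α = 4 * u + 3 := ⟨α / 4, by omega⟩
        refine ⟨2 * γ ^ 2 + α * γ + 2 * u ^ 2 + 5 * u + 3, ?_, ?_⟩
        · nlinarith [sq_nonneg ((γ:ℤ)), sq_nonneg ((u:ℤ)), mul_nonneg (Int.ofNat_nonneg α) (Int.ofNat_nonneg γ), Int.ofNat_nonneg u]
        · have hα : (α : ℚ) = 4 * u + 3 := by exact_mod_cast congrArg (Nat.cast : ℕ → ℚ) hu
          push_cast
          rw [hα]; ring
    · -- case 8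
      obtain ⟨t, ht⟩ : ∃ t, α = 4 * t + 2 := ⟨α / 4, by omega⟩
      refine ⟨2 * γ ^ 2 + α * γ + 2 * t ^ 2 + 4 * t + 2, ?_, ?_⟩
      · nlinarith [sq_nonneg ((γ:ℤ)), sq_nonneg ((t:ℤ)), mul_nonneg (Int.ofNat_nonneg α) (Int.ofNat_nonneg γ), Int.ofNat_nonneg t]
      · have hα : (α : ℚ) = 4 * t + 2 := by exact_mod_cast congrArg (Nat.cast : ℕ → ℚ) ht
        push_cast
        rw [hα]; ring
    · -- impossible
      exfalso
      simp only [Nat.even_iff, Nat.odd_iff] at h1 h2 h3 h4 h5 h6 h7 h8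
      omega
  obtain ⟨z, hz1, hz2⟩ := hmain
  refine ⟨z.toNat, by omega, ?_⟩
  rw [hz2]
  exact_mod_cast (Int.toNat_of_nonneg (by omega)).symm
end

section
/- For every triple (α, β, γ) ∈ P', the savings function satisfies F(α, β, γ) ≥ α/2 + γ. -/
set_option maxHeartbeats 1000000 in
private theorem stmt13_key (a b c : ℕ) (hba : b ≤ a)
    (hor : (2 ≤ b ∧ 1 ≤ c) ∨ (b = 2 ∧ c = 0 ∧ 2 ≤ a)) :
    (a : ℚ) / 2 + (c : ℚ) ≤ F a b c := by
  have hba' : (b : ℚ) ≤ a := by exact_mod_cast hba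
  have ha0 : (0:ℚ) ≤ a := by positivity
  have hb0 : (0:ℚ) ≤ b := by positivity
  have hc0 : (0:ℚ) ≤ c := by positivity
  unfold F
  split_ifs with h1 h2 h3 h4 h5 h6 h7 h8
  · obtain ⟨-, p1, p2⟩ := h1
    have p2' : (b:ℚ) ≤ c + 1 := by exact_mod_cast Nat.lt_succ_iff.mp p2
    rcases hor with ⟨hb, hc⟩ | ⟨rfl, rfl, ha⟩
    · have hb' : (2:ℚ) ≤ b := by exact_mod_cast hb
      nlinarith [mul_nonneg ha0 (by linarith : (0:ℚ) ≤ (b:ℚ) - 2),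
        mul_nonneg hb0 (by linarith [p2'] : (0:ℚ) ≤ (c:ℚ) + 1 - b),
        mul_nonneg hc0 (by linarith : (0:ℚ) ≤ (b:ℚ) - 2)]
    · exfalso; omega
  · obtain ⟨-, p1, p2⟩ := h2
    rcases hor with ⟨hb, hc⟩ | ⟨rfl, rfl, ha⟩
    · have hb' : (2:ℚ) ≤ b := by exact_mod_cast hb
      nlinarith [mul_nonneg (by linarith : (0:ℚ) ≤ (a:ℚ) - b)
          (by linarith : (0:ℚ) ≤ (b:ℚ) - 2),
        mul_nonneg hc0 (by linarith : (0:ℚ) ≤ (b:ℚ) - 2)]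
    · push_cast; linarith
  · obtain ⟨-, p1, p2⟩ := h3
    have p2' : (a:ℚ) + 6 * c + 8 ≤ 3 * b := by exact_mod_cast p2
    rcases hor with ⟨hb, hc⟩ | ⟨rfl, rfl, ha⟩
    · have hb' : (2:ℚ) ≤ b := by exact_mod_cast hb
      have hc' : (1:ℚ) ≤ c := by exact_mod_cast hc
      have h34 : 3 * (c:ℚ) + 4 ≤ b := by linarith
      nlinarith [mul_nonneg (by linarith : (0:ℚ) ≤ (a:ℚ) - b)
          (by linarith : (0:ℚ) ≤ (b:ℚ) - 3),
        mul_nonneg hc0 (by linarith : (0:ℚ) ≤ (b:ℚ) - 3 * c - 4),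
        mul_nonneg hc0 hc0]
    · exfalso; omega
  · obtain ⟨-, p1⟩ := h4
    rcases hor with ⟨hb, hc⟩ | ⟨rfl, rfl, ha⟩
    · have hb' : (2:ℚ) ≤ b := by exact_mod_cast hb
      have hc' : (1:ℚ) ≤ c := by exact_mod_cast hc
      nlinarith [mul_nonneg (by linarith : (0:ℚ) ≤ (a:ℚ) - b)
          (by linarith : (0:ℚ) ≤ (b:ℚ) - 2),
        mul_nonneg hc0 (by linarith : (0:ℚ) ≤ (b:ℚ) - 2)]
    · push_cast; linarith
  · obtain ⟨-, p1, p2⟩ := h5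
    have p2' : 2 * (c:ℚ) + 3 ≤ b := by exact_mod_cast p2
    rcases hor with ⟨hb, hc⟩ | ⟨rfl, rfl, ha⟩
    · have hb' : (2:ℚ) ≤ b := by exact_mod_cast hb
      nlinarith [mul_nonneg (by linarith : (0:ℚ) ≤ (a:ℚ) - b)
          (by linarith : (0:ℚ) ≤ (b:ℚ) - 2),
        mul_nonneg hc0 (by linarith : (0:ℚ) ≤ (b:ℚ) - 2 * c - 3),
        mul_nonneg hc0 hc0]
    · exfalso; omega
  · obtain ⟨-, p1⟩ := h6
    have p1' : (a:ℚ) + 4 * c + 6 < 2 * b := by exact_mod_cast p1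
    nlinarith [mul_nonneg hc0 (by linarith : (0:ℚ) ≤ (a:ℚ) - 1),
      mul_nonneg hc0 hc0, mul_nonneg ha0 ha0]
  · obtain ⟨-, p1⟩ := h7
    have p1' : (a:ℚ) + 4 * c + 6 < 2 * b := by exact_mod_cast p1
    nlinarith [mul_nonneg hc0 (by linarith : (0:ℚ) ≤ (a:ℚ) - 1),
      mul_nonneg hc0 hc0, mul_nonneg ha0 ha0]
  · obtain ⟨-, p1⟩ := h8
    have p1' : (a:ℚ) + 4 * c + 6 < 2 * b := by exact_mod_cast p1
    nlinarith [mul_nonneg hc0 (by linarith : (0:ℚ) ≤ (a:ℚ) - 1),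
      mul_nonneg hc0 hc0, mul_nonneg ha0 ha0]
  · exfalso
    simp only [Nat.even_iff, Nat.odd_iff] at h1 h2 h3 h4 h5 h6 h7 h8
    omega

/-- For every `(α, β, γ) ∈ P'` the savings function satisfies
`F(α, β, γ) ≥ α/2 + γ`. -/
theorem stmt_13 (α β γ : ℕ) (h : memP' α β γ) :
    (α : ℚ) / 2 + (γ : ℚ) ≤ F α β γ := by
  rcases h with ⟨hb, hba, hc⟩ | ⟨k, hk, ha, hb, hc⟩ | ⟨ha, hb, hc⟩ | ⟨ha, hb, hc⟩
  · exact stmt13_key _ _ _ hba (Or.inl ⟨hb, hc⟩)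
  · subst ha hb hc
    exact stmt13_key _ _ _ (by omega) (Or.inr ⟨rfl, rfl, by omega⟩)
  · subst ha hb hc; norm_num [F, Nat.even_iff, Nat.odd_iff]
  · subst ha hb hc; norm_num [F, Nat.even_iff, Nat.odd_iff]
end

section
/- For all integers α > β ≥ 3 and γ ≥ 1, the savings function satisfies F(α, β, γ) ≥ (β − 1)·(2γ + 1) + 2. -/
set_option maxHeartbeats 1000000 in
/-- For all integers `α > β ≥ 3` and `γ ≥ 1`,
`F(α, β, γ) ≥ (β − 1)·(2γ + 1) + 2`. -/
theorem stmt_15 (α β γ : ℕ) (hβ : 3 ≤ β) (hβα : β < α) (hγ : 1 ≤ γ) :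
    ((β : ℚ) - 1) * (2 * (γ : ℚ) + 1) + 2 ≤ F α β γ := by
  unfold F
  simp only [Nat.even_iff, Nat.odd_iff]
  have hb : (3:ℚ) ≤ β := by exact_mod_cast hβ
  have hc : (1:ℚ) ≤ γ := by exact_mod_cast hγ
  have hab : (β:ℚ) + 1 ≤ α := by exact_mod_cast hβα
  split_ifs with h1 h2 h3 h4 h5 h6 h7 h8
  · have h : β + 2 ≤ α := by omega
    have h' : (β:ℚ) + 2 ≤ α := by exact_mod_cast h
    nlinarith [mul_nonneg (by linarith : (0:ℚ) ≤ (β:ℚ) - 1) (by linarith : (0:ℚ) ≤ (α:ℚ) - β - 2)]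
  · have h : β + 2 ≤ α ∧ γ + 2 ≤ β := by omega
    have h' : (β:ℚ) + 2 ≤ α := by exact_mod_cast h.1
    have h'' : (γ:ℚ) + 2 ≤ β := by exact_mod_cast h.2
    nlinarith [mul_nonneg (by linarith : (0:ℚ) ≤ (β:ℚ) - 1) (by linarith : (0:ℚ) ≤ (α:ℚ) - β - 2)]
  · have h : β + 2 ≤ α ∧ 3 * γ + 5 ≤ β := by omega
    have h' : (β:ℚ) + 2 ≤ α := by exact_mod_cast h.1
    have h'' : 3 * (γ:ℚ) + 5 ≤ β := by exact_mod_cast h.2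
    nlinarith [mul_nonneg (by linarith : (0:ℚ) ≤ (β:ℚ) - 2) (by linarith : (0:ℚ) ≤ (α:ℚ) - β - 2)]
  · nlinarith [mul_nonneg (by linarith : (0:ℚ) ≤ (β:ℚ) - 1) (by linarith : (0:ℚ) ≤ (α:ℚ) - β - 1)]
  · have h'' : 2 * (γ:ℚ) + 3 ≤ β := by exact_mod_cast h5.2.2
    nlinarith [mul_nonneg (by linarith : (0:ℚ) ≤ (β:ℚ) - 1) (by linarith : (0:ℚ) ≤ (α:ℚ) - β - 1)]
  · nlinarith [sq_nonneg ((α:ℚ) - 4 * γ - 2),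
      mul_nonneg (by linarith : (0:ℚ) ≤ (α:ℚ) - 1 - β) (by linarith : (0:ℚ) ≤ 2 * (γ:ℚ) + 1)]
  · nlinarith [sq_nonneg ((α:ℚ) - 4 * γ - 2),
      mul_nonneg (by linarith : (0:ℚ) ≤ (α:ℚ) - 1 - β) (by linarith : (0:ℚ) ≤ 2 * (γ:ℚ) + 1)]
  · nlinarith [sq_nonneg ((α:ℚ) - 4 * γ - 2),
      mul_nonneg (by linarith : (0:ℚ) ≤ (α:ℚ) - 1 - β) (by linarith : (0:ℚ) ≤ 2 * (γ:ℚ) + 1)]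
  · exfalso; omega
end

section
/- For all integers α > β ≥ 3 and γ ≥ 1, setting ℓ := F(α, β, γ) − (β − 1)·(2γ + 1), the savings function satisfies F(α, β, γ) ≥ (α − 2ℓ + 1)·(2γ + 1) + ℓ. -/
set_option maxHeartbeats 2000000 in
/-- For all integers `α > β ≥ 3` and `γ ≥ 1`, setting
`ℓ := F(α, β, γ) − (β − 1)·(2γ + 1)`, one has
`F(α, β, γ) ≥ (α − 2ℓ + 1)·(2γ + 1) + ℓ`. -/
theorem stmt_16 (α β γ : ℕ) (hβ : 3 ≤ β) (hβα : β < α) (hγ : 1 ≤ γ) :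
    ((α : ℚ) - 2 * (F α β γ - ((β : ℚ) - 1) * (2 * (γ : ℚ) + 1)) + 1)
        * (2 * (γ : ℚ) + 1)
      + (F α β γ - ((β : ℚ) - 1) * (2 * (γ : ℚ) + 1)) ≤ F α β γ := by
  have hb : (3:ℚ) ≤ (β:ℚ) := by exact_mod_cast hβ
  have hba : (β:ℚ) < (α:ℚ) := by exact_mod_cast hβα
  have hc : (1:ℚ) ≤ (γ:ℚ) := by exact_mod_cast hγ
  unfold F
  split_ifs with h1 h2 h3 h4 h5 h6 h7 h8
  · -- case 1
    have hev : (α + β) % 2 = 0 := Nat.even_iff.mp h1.1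
    have h2a : β + 2 ≤ α := by omega
    have h2a' : (β:ℚ) + 2 ≤ (α:ℚ) := by exact_mod_cast h2a
    nlinarith [mul_nonneg (mul_nonneg (by linarith : (0:ℚ) ≤ 2*(γ:ℚ)+1) (by linarith : (0:ℚ) ≤ (β:ℚ)-2)) (by linarith : (0:ℚ) ≤ (α:ℚ)-(β:ℚ)-2)]
  · -- case 2
    have hev : (α + β) % 2 = 0 := Nat.even_iff.mp h2.1
    have h2a : β + 2 ≤ α := by omega
    have h2a' : (β:ℚ) + 2 ≤ (α:ℚ) := by exact_mod_cast h2a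
    have hbc : γ + 2 ≤ β := (h2.2.2).resolve_left (by omega)
    have hbc' : (γ:ℚ) + 2 ≤ (β:ℚ) := by exact_mod_cast hbc
    nlinarith [mul_nonneg (mul_nonneg (by linarith : (0:ℚ) ≤ 2*(γ:ℚ)+1) (by linarith : (0:ℚ) ≤ (β:ℚ)-2-(γ:ℚ))) (by linarith : (0:ℚ) ≤ (α:ℚ)-(β:ℚ)-2),
      mul_nonneg (mul_nonneg (by linarith : (0:ℚ) ≤ 2*(γ:ℚ)+1) (by linarith : (0:ℚ) ≤ (γ:ℚ))) (by linarith : (0:ℚ) ≤ (α:ℚ)-(β:ℚ)-2)]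
  · -- case 3
    have hev : (α + β) % 2 = 0 := Nat.even_iff.mp h3.1
    have h2a : β + 2 ≤ α := by omega
    have h2a' : (β:ℚ) + 2 ≤ (α:ℚ) := by exact_mod_cast h2a
    have h3b : α + 6 * γ + 8 ≤ 3 * β := h3.2.2
    have h3b' : (α:ℚ) + 6*(γ:ℚ) + 8 ≤ 3*(β:ℚ) := by exact_mod_cast h3b
    -- b ≥ 3c+5, a ≥ b+2 ⇒ inner = (b-3)(a-b+2) - 2 - 8c ≥ (3c+2)*4 - 2 - 8c ≥ 0
    nlinarith [mul_nonneg (mul_nonneg (by linarith : (0:ℚ) ≤ 2*(γ:ℚ)+1) (by linarith : (0:ℚ) ≤ (β:ℚ)-3-3*(γ:ℚ)-2)) (by linarith : (0:ℚ) ≤ (α:ℚ)-(β:ℚ)+2),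
      mul_nonneg (by linarith : (0:ℚ) ≤ 2*(γ:ℚ)+1) (by linarith : (0:ℚ) ≤ (α:ℚ)-(β:ℚ)-2),
      mul_nonneg (mul_nonneg (by linarith : (0:ℚ) ≤ 2*(γ:ℚ)+1) (by linarith : (0:ℚ) ≤ (γ:ℚ))) (by linarith : (0:ℚ) ≤ (α:ℚ)-(β:ℚ)+2)]
  · -- case 4
    have h1a : (β:ℚ) + 1 ≤ (α:ℚ) := by exact_mod_cast hβα
    nlinarith [mul_nonneg (mul_nonneg (by linarith : (0:ℚ) ≤ 2*(γ:ℚ)+1) (by linarith : (0:ℚ) ≤ (β:ℚ)-2)) (by linarith : (0:ℚ) ≤ (α:ℚ)-(β:ℚ)-1)]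
  · -- case 5
    have h1a : (β:ℚ) + 1 ≤ (α:ℚ) := by exact_mod_cast hβα
    have hbc : 2 * γ + 3 ≤ β := h5.2.2
    have hbc' : 2*(γ:ℚ) + 3 ≤ (β:ℚ) := by exact_mod_cast hbc
    nlinarith [mul_nonneg (mul_nonneg (by linarith : (0:ℚ) ≤ 2*(γ:ℚ)+1) (by linarith : (0:ℚ) ≤ (β:ℚ)-2-2*(γ:ℚ)-1)) (by linarith : (0:ℚ) ≤ (α:ℚ)-(β:ℚ)+1),
      mul_nonneg (mul_nonneg (by linarith : (0:ℚ) ≤ 2*(γ:ℚ)+1) (by linarith : (0:ℚ) ≤ 2*(γ:ℚ)+1)) (by linarith : (0:ℚ) ≤ (α:ℚ)-(β:ℚ)-1)]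
  · -- case 6
    have hab : α + 4 * γ + 6 < 2 * β := h6.2
    have hab' : (α:ℚ) + 4*(γ:ℚ) + 6 < 2*(β:ℚ) := by exact_mod_cast hab
    have hba1 : (β:ℚ) + 1 ≤ (α:ℚ) := by exact_mod_cast hβα
    nlinarith [mul_nonneg (by linarith : (0:ℚ) ≤ 2*(γ:ℚ)+1) (sq_nonneg ((α:ℚ)/2 - 2*(γ:ℚ) - 2)),
      sq_nonneg ((α:ℚ)/2 - 2*(γ:ℚ) - 2),
      mul_nonneg (mul_nonneg (by linarith : (0:ℚ) ≤ 2*(γ:ℚ)+1) (by linarith : (0:ℚ) ≤ (γ:ℚ))) (by linarith : (0:ℚ) ≤ (α:ℚ)-(β:ℚ)),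
      mul_nonneg (by linarith : (0:ℚ) ≤ 4*(γ:ℚ)+1) (by linarith : (0:ℚ) ≤ (α:ℚ)-1-(β:ℚ))]
  · -- case 7
    have hab : α + 4 * γ + 6 < 2 * β := h7.2
    have hab' : (α:ℚ) + 4*(γ:ℚ) + 6 < 2*(β:ℚ) := by exact_mod_cast hab
    have hba1 : (β:ℚ) + 1 ≤ (α:ℚ) := by exact_mod_cast hβα
    nlinarith [mul_nonneg (by linarith : (0:ℚ) ≤ 2*(γ:ℚ)+1) (sq_nonneg ((α:ℚ)/2 - 2*(γ:ℚ) - 2)),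
      sq_nonneg ((α:ℚ)/2 - 2*(γ:ℚ) - 2),
      mul_nonneg (mul_nonneg (by linarith : (0:ℚ) ≤ 2*(γ:ℚ)+1) (by linarith : (0:ℚ) ≤ (γ:ℚ))) (by linarith : (0:ℚ) ≤ (α:ℚ)-(β:ℚ)),
      mul_nonneg (by linarith : (0:ℚ) ≤ 4*(γ:ℚ)+1) (by linarith : (0:ℚ) ≤ (α:ℚ)-1-(β:ℚ))]
  · -- case 8
    have hab : α + 4 * γ + 6 < 2 * β := h8.2
    have hab' : (α:ℚ) + 4*(γ:ℚ) + 6 < 2*(β:ℚ) := by exact_mod_cast hab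
    have hba1 : (β:ℚ) + 1 ≤ (α:ℚ) := by exact_mod_cast hβα
    nlinarith [mul_nonneg (by linarith : (0:ℚ) ≤ 2*(γ:ℚ)+1) (sq_nonneg ((α:ℚ)/2 - 2*(γ:ℚ) - 2)),
      sq_nonneg ((α:ℚ)/2 - 2*(γ:ℚ) - 2),
      mul_nonneg (mul_nonneg (by linarith : (0:ℚ) ≤ 2*(γ:ℚ)+1) (by linarith : (0:ℚ) ≤ (γ:ℚ))) (by linarith : (0:ℚ) ≤ (α:ℚ)-(β:ℚ)),
      mul_nonneg (by linarith : (0:ℚ) ≤ 4*(γ:ℚ)+1) (by linarith : (0:ℚ) ≤ (α:ℚ)-1-(β:ℚ))]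
  · -- impossible case
    exfalso
    simp only [Nat.even_iff, Nat.odd_iff] at h1 h2 h3 h4 h5 h6 h7 h8
    omega
end

section
/- For all integers α ≥ β ≥ 3, γ ≥ 1, and k ≥ 2, the savings function satisfies F(α, β, γ) ≥ (β − 2k + 1)·(k + 2γ) + k. -/
set_option maxHeartbeats 1600000

/-- For all integers `α ≥ β ≥ 3`, `γ ≥ 1`, and `k ≥ 2`,
`F(α, β, γ) ≥ (β − 2k + 1)·(k + 2γ) + k`. -/
theorem stmt_17 (α β γ k : ℕ) (hβ : 3 ≤ β) (hβα : β ≤ α) (hγ : 1 ≤ γ) (hk : 2 ≤ k) :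
    ((β : ℚ) - 2 * (k : ℚ) + 1) * ((k : ℚ) + 2 * (γ : ℚ)) + (k : ℚ) ≤ F α β γ := by
  have qk : (2:ℚ) ≤ (k:ℚ) := by exact_mod_cast hk
  have qb : (3:ℚ) ≤ (β:ℚ) := by exact_mod_cast hβ
  have qba : (β:ℚ) ≤ (α:ℚ) := by exact_mod_cast hβα
  have qg : (1:ℚ) ≤ (γ:ℚ) := by exact_mod_cast hγ
  unfold F
  simp only [Nat.even_iff, Nat.odd_iff]
  split_ifs with h1 h2 h3 h4 h5 h6 h7 h8
  · -- case 1
    obtain ⟨hp, c1, c2⟩ := h1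
    have q1 : (β:ℚ) + 2 ≤ (α:ℚ) := by exact_mod_cast (show β + 2 ≤ α by omega)
    have q2 : (β:ℚ) ≤ (γ:ℚ) + 1 := by exact_mod_cast (show β ≤ γ + 1 by omega)
    nlinarith [mul_nonneg (by linarith : (0:ℚ) ≤ (α:ℚ) - β - 2) (by linarith : (0:ℚ) ≤ (β:ℚ) - 1),
      mul_nonneg (by linarith : (0:ℚ) ≤ (k:ℚ) - 1) (by linarith : (0:ℚ) ≤ (γ:ℚ) + 1 - β),
      mul_nonneg (by linarith : (0:ℚ) ≤ (k:ℚ) - 1) (by linarith : (0:ℚ) ≤ 2*(k:ℚ) - 3),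
      mul_nonneg (by linarith : (0:ℚ) ≤ (k:ℚ) - 1) (by linarith : (0:ℚ) ≤ (γ:ℚ))]
  · -- case 2
    obtain ⟨hp, c1, c2⟩ := h2
    rcases c2 with hab | hcb
    · have q1 : (β:ℚ) ≤ 3 * (γ:ℚ) + 3 := by exact_mod_cast (show β ≤ 3*γ + 3 by omega)
      have qe : (α:ℚ) = β := by exact_mod_cast hab
      nlinarith [mul_nonneg (by linarith : (0:ℚ) ≤ (k:ℚ) - 1) (by linarith : (0:ℚ) ≤ 3*(γ:ℚ) + 3 - β),
        mul_nonneg (by linarith : (0:ℚ) ≤ (k:ℚ) - 2) (by linarith : (0:ℚ) ≤ (γ:ℚ)),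
        mul_nonneg (by linarith : (0:ℚ) ≤ (k:ℚ) - 1) (by linarith : (0:ℚ) ≤ 2*(k:ℚ) - 3)]
    · have q2 : (γ:ℚ) + 2 ≤ β := by exact_mod_cast hcb
      have q3 : 3 * (β:ℚ) ≤ (α:ℚ) + 6 * γ + 6 := by
        exact_mod_cast (show 3*β ≤ α + 6*γ + 6 by omega)
      rcases le_or_gt (2*k) (α - β + 2) with h | h
      · -- k small: min at b = c+2
        have qA : 2*(k:ℚ) ≤ (α:ℚ) - β + 2 := by
          have : 2*k + β ≤ α + 2 := by omega
          have := (show ((2*k + β : ℕ):ℚ) ≤ ((α + 2 : ℕ):ℚ) from by exact_mod_cast this)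
          push_cast at this; linarith
        nlinarith [mul_nonneg (by linarith : (0:ℚ) ≤ (α:ℚ) - β + 2 - 2*k)
            (by linarith : (0:ℚ) ≤ (β:ℚ) - γ - 2),
          sq_nonneg ((k:ℚ) - 1),
          mul_nonneg (by linarith : (0:ℚ) ≤ (γ:ℚ)) (by linarith : (0:ℚ) ≤ 3*(k:ℚ) - 4),
          mul_nonneg (by linarith : (0:ℚ) ≤ (γ:ℚ)) (by linarith : (0:ℚ) ≤ (α:ℚ) - β),
          mul_nonneg (by linarith : (0:ℚ) ≤ (α:ℚ) - β) (by linarith : (0:ℚ) ≤ (k:ℚ) - 1)]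
      · -- k large: min at b = s/2+3c+3
        have qB : (α:ℚ) - β + 4 ≤ 2*(k:ℚ) := by
          have : α - β + 4 ≤ 2*k := by omega
          have := (show ((α + 4 : ℕ):ℚ) ≤ ((2*k + β : ℕ):ℚ) from by exact_mod_cast (by omega : α + 4 ≤ 2*k + β))
          push_cast at this; linarith
        nlinarith [mul_nonneg (by linarith : (0:ℚ) ≤ 2*(k:ℚ) - α + β - 2)
            (by linarith : (0:ℚ) ≤ (α:ℚ) + 6*γ + 6 - 3*β),
          mul_nonneg (by linarith : (0:ℚ) ≤ (γ:ℚ)) (by linarith : (0:ℚ) ≤ 2*(k:ℚ) - α + β - 4),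
          mul_nonneg (by linarith : (0:ℚ) ≤ 2*(k:ℚ) - α + β - 2)
            (by linarith : (0:ℚ) ≤ 2*(k:ℚ) - α + β - 4),
          mul_nonneg (by linarith : (0:ℚ) ≤ (γ:ℚ)) (by linarith : (0:ℚ) ≤ (α:ℚ) - β),
          mul_nonneg (by linarith : (0:ℚ) ≤ 2*(k:ℚ) - α + β - 2) (by linarith : (0:ℚ) ≤ (α:ℚ) - β),
          sq_nonneg ((α:ℚ) - β)]
  · -- case 3
    obtain ⟨hp, c1, c2⟩ := h3
    have q1 : 2 * (β:ℚ) ≤ (α:ℚ) + 4 * γ + 6 := by exact_mod_cast c1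
    have q2 : (α:ℚ) + 6 * γ + 8 ≤ 3 * β := by exact_mod_cast c2
    rcases le_or_gt (2*k) (α - β + 4) with h | h
    · have qA : 2*(k:ℚ) ≤ (α:ℚ) - β + 4 := by
        have := (show ((2*k + β : ℕ):ℚ) ≤ ((α + 4 : ℕ):ℚ) from by exact_mod_cast (by omega : 2*k + β ≤ α + 4))
        push_cast at this; linarith
      nlinarith [mul_nonneg (by linarith : (0:ℚ) ≤ (α:ℚ) - β + 4 - 2*k)
          (by linarith : (0:ℚ) ≤ 3*(β:ℚ) - α - 6*γ - 8),
        sq_nonneg ((α:ℚ) - β - 4*((k:ℚ) - 2)),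
        mul_nonneg (by linarith : (0:ℚ) ≤ (γ:ℚ)) (by linarith : (0:ℚ) ≤ (α:ℚ) - β),
        mul_nonneg (by linarith : (0:ℚ) ≤ (γ:ℚ)) (by linarith : (0:ℚ) ≤ (k:ℚ) - 2),
        sq_nonneg ((α:ℚ) - β), sq_nonneg ((k:ℚ) - 2)]
    · have qB : (α:ℚ) - β + 4 ≤ 2*(k:ℚ) := by
        have := (show ((α + 4 : ℕ):ℚ) ≤ ((2*k + β : ℕ):ℚ) from by exact_mod_cast (by omega : α + 4 ≤ 2*k + β))
        push_cast at this; linarith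
      nlinarith [mul_nonneg (by linarith : (0:ℚ) ≤ 2*(k:ℚ) - α + β - 4)
          (by linarith : (0:ℚ) ≤ (α:ℚ) + 4*γ + 6 - 2*β),
        mul_nonneg (by linarith : (0:ℚ) ≤ 2*(k:ℚ) - α + β - 4) (by linarith : (0:ℚ) ≤ (α:ℚ) - β),
        mul_nonneg (by linarith : (0:ℚ) ≤ (γ:ℚ)) (by linarith : (0:ℚ) ≤ (α:ℚ) - β),
        sq_nonneg ((α:ℚ) - β), sq_nonneg (2*(k:ℚ) - α + β - 4)]
  · -- case 4
    obtain ⟨hp, c1⟩ := h4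
    have q1 : (β:ℚ) + 1 ≤ (α:ℚ) := by exact_mod_cast (show β + 1 ≤ α by omega)
    have q2 : (β:ℚ) ≤ 2*(γ:ℚ) + 2 := by exact_mod_cast (show β ≤ 2*γ + 2 by omega)
    nlinarith [mul_nonneg (by linarith : (0:ℚ) ≤ (α:ℚ) - β - 1) (by linarith : (0:ℚ) ≤ (β:ℚ) - 1),
      mul_nonneg (by linarith : (0:ℚ) ≤ (k:ℚ) - 1) (by linarith : (0:ℚ) ≤ 2*(γ:ℚ) + 2 - β),
      mul_nonneg (by linarith : (0:ℚ) ≤ (k:ℚ) - 1) (by linarith : (0:ℚ) ≤ 2*(k:ℚ) - 3),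
      mul_nonneg (by linarith : (0:ℚ) ≤ (k:ℚ) - 2) (by linarith : (0:ℚ) ≤ (γ:ℚ))]
  · -- case 5
    obtain ⟨hp, c1, c2⟩ := h5
    have q1 : (β:ℚ) + 1 ≤ (α:ℚ) := by exact_mod_cast (show β + 1 ≤ α by omega)
    have q2 : 2 * (β:ℚ) ≤ (α:ℚ) + 4 * γ + 6 := by exact_mod_cast c1
    have q3 : 2 * (γ:ℚ) + 3 ≤ β := by exact_mod_cast c2
    rcases le_or_gt (2*k) (α - β + 3) with h | h
    · have qA : 2*(k:ℚ) ≤ (α:ℚ) - β + 3 := by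
        have := (show ((2*k + β : ℕ):ℚ) ≤ ((α + 3 : ℕ):ℚ) from by exact_mod_cast (by omega : 2*k + β ≤ α + 3))
        push_cast at this; linarith
      nlinarith [mul_nonneg (by linarith : (0:ℚ) ≤ (α:ℚ) - β + 3 - 2*k)
          (by linarith : (0:ℚ) ≤ (β:ℚ) - 2*γ - 3),
        mul_nonneg (by linarith : (0:ℚ) ≤ (γ:ℚ)) (by linarith : (0:ℚ) ≤ 2*(k:ℚ) - 3),
        mul_nonneg (by linarith : (0:ℚ) ≤ (k:ℚ) - 1) (by linarith : (0:ℚ) ≤ 2*(k:ℚ) - 3),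
        mul_nonneg (by linarith : (0:ℚ) ≤ (γ:ℚ)) (by linarith : (0:ℚ) ≤ (α:ℚ) - β)]
    · have qB : (α:ℚ) - β + 4 ≤ 2*(k:ℚ) := by
        have := (show ((α + 4 : ℕ):ℚ) ≤ ((2*k + β : ℕ):ℚ) from by exact_mod_cast (by omega : α + 4 ≤ 2*k + β))
        push_cast at this; linarith
      nlinarith [mul_nonneg (by linarith : (0:ℚ) ≤ 2*(k:ℚ) - α + β - 3)
          (by linarith : (0:ℚ) ≤ (α:ℚ) + 4*γ + 6 - 2*β),
        mul_nonneg (by linarith : (0:ℚ) ≤ 2*(k:ℚ) - α + β - 3)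
          (by linarith : (0:ℚ) ≤ 2*(k:ℚ) - α + β - 4),
        mul_nonneg (by linarith : (0:ℚ) ≤ (α:ℚ) - β - 1)
          (by linarith : (0:ℚ) ≤ 2*(k:ℚ) - α + β - 3),
        mul_nonneg (by linarith : (0:ℚ) ≤ (γ:ℚ)) (by linarith : (0:ℚ) ≤ (α:ℚ) - β),
        sq_nonneg ((α:ℚ) - β)]
  · -- case 6 : α ≡ 0 mod 4
    obtain ⟨c0, c1⟩ := h6
    obtain ⟨t, ht⟩ : ∃ t, α = 4 * t := ⟨α / 4, by omega⟩
    subst ht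
    have q1 : 4*(t:ℚ) + 4 * γ + 6 < 2 * β := by exact_mod_cast c1
    have qba' : (β:ℚ) ≤ 4*(t:ℚ) := by exact_mod_cast hβα
    push_cast
    rcases le_or_gt (k + γ) t with h | h
    · have q : (k:ℚ) + γ ≤ t := by exact_mod_cast h
      nlinarith [sq_nonneg (2*(t:ℚ) - 2*k - 2*γ + 1), mul_nonneg (by linarith : (0:ℚ) ≤ 4*(t:ℚ) - β)
        (by linarith : (0:ℚ) ≤ (k:ℚ) + 2*γ)]
    · have q : (t:ℚ) + 1 ≤ (k:ℚ) + γ := by exact_mod_cast h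
      nlinarith [sq_nonneg (2*(k:ℚ) + 2*γ - 2*t - 1), mul_nonneg (by linarith : (0:ℚ) ≤ 4*(t:ℚ) - β)
        (by linarith : (0:ℚ) ≤ (k:ℚ) + 2*γ)]
  · -- case 7 : α odd
    obtain ⟨c0, c1⟩ := h7
    obtain ⟨t, ht⟩ : ∃ t, α = 2 * t + 1 := ⟨α / 2, by omega⟩
    subst ht
    have q1 : 2*(t:ℚ) + 1 + 4 * γ + 6 < 2 * β := by exact_mod_cast c1
    have qba' : (β:ℚ) ≤ 2*(t:ℚ) + 1 := by exact_mod_cast hβα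
    push_cast
    rcases le_or_gt (2*k + 2*γ) (t + 1) with h | h
    · have q : 2*(k:ℚ) + 2*γ ≤ (t:ℚ) + 1 := by exact_mod_cast h
      nlinarith [mul_nonneg (by linarith : (0:ℚ) ≤ (t:ℚ) + 1 - 2*k - 2*γ)
          (by linarith : (0:ℚ) ≤ (t:ℚ) + 2 - 2*k - 2*γ),
        mul_nonneg (by linarith : (0:ℚ) ≤ 2*(t:ℚ) + 1 - β) (by linarith : (0:ℚ) ≤ (k:ℚ) + 2*γ)]
    · have q : (t:ℚ) + 2 ≤ 2*(k:ℚ) + 2*γ := by exact_mod_cast h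
      nlinarith [mul_nonneg (by linarith : (0:ℚ) ≤ 2*(k:ℚ) + 2*γ - t - 2)
          (by linarith : (0:ℚ) ≤ 2*(k:ℚ) + 2*γ - t - 1),
        mul_nonneg (by linarith : (0:ℚ) ≤ 2*(t:ℚ) + 1 - β) (by linarith : (0:ℚ) ≤ (k:ℚ) + 2*γ)]
  · -- case 8 : α ≡ 2 mod 4
    obtain ⟨c0, c1⟩ := h8
    obtain ⟨t, ht⟩ : ∃ t, α = 4 * t + 2 := ⟨α / 4, by omega⟩
    subst ht
    have q1 : 4*(t:ℚ) + 2 + 4 * γ + 6 < 2 * β := by exact_mod_cast c1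
    have qba' : (β:ℚ) ≤ 4*(t:ℚ) + 2 := by exact_mod_cast hβα
    push_cast
    nlinarith [sq_nonneg ((k:ℚ) + γ - t - 1),
      mul_nonneg (by linarith : (0:ℚ) ≤ 4*(t:ℚ) + 2 - β) (by linarith : (0:ℚ) ≤ (k:ℚ) + 2*γ)]
  · -- unreachable
    exfalso
    omega
end

section
/- For all integers α ≥ β ≥ 3, γ ≥ 1, and ℓ ≥ 2 such that ℓ ≥ F(α, β, γ) − (2γ + 1 + (β − 2)·(2γ + ℓ)), the savings function satisfies F(α, β, γ) ≥ γ + (α − 2ℓ)·(2γ + ℓ) + ℓ + 1. -/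
set_option maxHeartbeats 3200000 in
/-- For all integers `α ≥ β ≥ 3`, `γ ≥ 1`, and `ℓ ≥ 2` such that
`ℓ ≥ F(α, β, γ) − (2γ + 1 + (β − 2)·(2γ + ℓ))` (an inequality of rationals), one has
`F(α, β, γ) ≥ γ + (α − 2ℓ)·(2γ + ℓ) + ℓ + 1`. -/
theorem stmt_18 (α β γ ℓ : ℕ) (hβ : 3 ≤ β) (hβα : β ≤ α) (hγ : 1 ≤ γ) (hℓ : 2 ≤ ℓ)
    (hcond : F α β γ - (2 * (γ : ℚ) + 1 + ((β : ℚ) - 2) * (2 * (γ : ℚ) + (ℓ : ℚ)))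
      ≤ (ℓ : ℚ)) :
    (γ : ℚ) + ((α : ℚ) - 2 * (ℓ : ℚ)) * (2 * (γ : ℚ) + (ℓ : ℚ)) + (ℓ : ℚ) + 1
      ≤ F α β γ := by
  have hbQ : (3:ℚ) ≤ β := by exact_mod_cast hβ
  have habQ : (β:ℚ) ≤ α := by exact_mod_cast hβα
  have hcQ : (1:ℚ) ≤ γ := by exact_mod_cast hγ
  have hlQ : (2:ℚ) ≤ ℓ := by exact_mod_cast hℓ
  simp only [F] at hcond ⊢
  split_ifs at hcond ⊢ with h1 h2 h3 h4 h5 h6 h7 h8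
  · -- case 1 : Even, β < α, β < γ+2
    obtain ⟨hev, hba, hbc⟩ := h1
    have hbcQ : (β:ℚ) ≤ γ + 1 := by
      have : β ≤ γ + 1 := by omega
      exact_mod_cast this
    have hkey : α + 2 ≤ β + 2 * ℓ := by
      by_contra hn
      obtain ⟨k, hk⟩ := hev
      have hbad : β + 2 * ℓ ≤ α := by omega
      have hbadQ : (β:ℚ) + 2 * ℓ ≤ α := by exact_mod_cast hbad
      nlinarith [hcond, mul_nonneg (by linarith : (0:ℚ) ≤ (β:ℚ) - 1)
        (by linarith : (0:ℚ) ≤ (α:ℚ) - β - 2 * ℓ)]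
    have hkQ : (α:ℚ) + 2 ≤ β + 2 * ℓ := by exact_mod_cast hkey
    have ht : (0:ℚ) ≤ 2 * ℓ + β - α - 2 := by linarith
    nlinarith [mul_nonneg ht (by linarith : (0:ℚ) ≤ (α:ℚ) - β),
      mul_nonneg ht (by linarith : (0:ℚ) ≤ (γ:ℚ) - 1),
      mul_nonneg ht (by linarith : (0:ℚ) ≤ (γ:ℚ) + 1 - β),
      sq_nonneg (2 * (ℓ:ℚ) + β - α - 2)]
  · -- case 2 : Even, 3β < α+6γ+8, (α=β ∨ γ+2 ≤ β)
    obtain ⟨hev, h3b, hor⟩ := h2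
    have h3bQ : 3 * (β:ℚ) ≤ α + 6 * γ + 7 := by
      have : 3 * β ≤ α + 6 * γ + 7 := by omega
      exact_mod_cast this
    have hkey : α + 2 ≤ β + 2 * ℓ := by
      by_contra hn
      obtain ⟨k, hk⟩ := hev
      have hbad : β + 2 * ℓ ≤ α := by omega
      have hgb : γ + 2 ≤ β := by
        rcases hor with h | h
        · omega
        · exact h
      have hbadQ : (β:ℚ) + 2 * ℓ ≤ α := by exact_mod_cast hbad
      have hgbQ : (γ:ℚ) + 2 ≤ β := by exact_mod_cast hgb
      nlinarith [hcond, mul_nonneg (by linarith : (0:ℚ) ≤ (β:ℚ) - 1)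
        (by linarith : (0:ℚ) ≤ (α:ℚ) - β - 2 * ℓ)]
    have hkQ : (α:ℚ) + 2 ≤ β + 2 * ℓ := by exact_mod_cast hkey
    have ht : (0:ℚ) ≤ 2 * ℓ + β - α - 2 := by linarith
    nlinarith [mul_nonneg ht (by linarith : (0:ℚ) ≤ (α:ℚ) - β),
      mul_nonneg ht (by linarith : (0:ℚ) ≤ (γ:ℚ) - 1),
      mul_nonneg ht (by linarith : (0:ℚ) ≤ (α:ℚ) + 6 * γ + 7 - 3 * β),
      sq_nonneg (2 * (ℓ:ℚ) + β - α - 2)]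
  · -- case 3 : Even, 2β ≤ α+4γ+6, α+6γ+8 ≤ 3β
    obtain ⟨hev, h2b, h3b⟩ := h3
    have h2bQ : 2 * (β:ℚ) ≤ α + 4 * γ + 6 := by exact_mod_cast h2b
    have h3bQ : (α:ℚ) + 6 * γ + 8 ≤ 3 * β := by exact_mod_cast h3b
    have hkey : α + 2 ≤ β + 2 * ℓ := by
      by_contra hn
      obtain ⟨k, hk⟩ := hev
      have hbad : β + 2 * ℓ ≤ α := by omega
      have hbadQ : (β:ℚ) + 2 * ℓ ≤ α := by exact_mod_cast hbad
      nlinarith [hcond, mul_nonneg (by linarith : (0:ℚ) ≤ (β:ℚ) - 1)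
        (by linarith : (0:ℚ) ≤ (α:ℚ) - β - 2 * ℓ)]
    have hkQ : (α:ℚ) + 2 ≤ β + 2 * ℓ := by exact_mod_cast hkey
    have ht : (0:ℚ) ≤ 2 * ℓ + β - α - 2 := by linarith
    rcases le_or_gt (2 * β) (α + 4 * γ + 3) with hd | hd
    · have hdQ : 2 * (β:ℚ) ≤ α + 4 * γ + 3 := by exact_mod_cast hd
      nlinarith [mul_nonneg ht (by linarith : (0:ℚ) ≤ (α:ℚ) + 4 * γ + 3 - 2 * β),
        sq_nonneg (2 * (ℓ:ℚ) + β - α - 2), ht]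
    · have hdQ : (α:ℚ) + 4 * γ + 4 ≤ 2 * β := by
        have : α + 4 * γ + 4 ≤ 2 * β := by omega
        exact_mod_cast this
      nlinarith [sq_nonneg (2 * (2 * (ℓ:ℚ) + β - α - 2) + (α + 4 * γ + 6 - 2 * β) - 3),
        mul_nonneg (by linarith : (0:ℚ) ≤ 2 * (β:ℚ) - α - 4 * γ - 4)
          (by linarith : (0:ℚ) ≤ (α:ℚ) + 4 * γ + 6 - 2 * β + 5), ht, hcQ, habQ]
  · -- case 4 : Odd, β < 2γ+3
    obtain ⟨hodd, hbc⟩ := h4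
    have hbcQ : (β:ℚ) ≤ 2 * γ + 2 := by
      have : β ≤ 2 * γ + 2 := by omega
      exact_mod_cast this
    have hkey : α + 3 ≤ β + 2 * ℓ := by
      by_contra hn
      obtain ⟨k, hk⟩ := hodd
      have hbad : β + 2 * ℓ ≤ α + 1 := by omega
      have hbadQ : (β:ℚ) + 2 * ℓ ≤ α + 1 := by exact_mod_cast hbad
      nlinarith [hcond, mul_nonneg (by linarith : (0:ℚ) ≤ (β:ℚ) - 1)
        (by linarith : (0:ℚ) ≤ (α:ℚ) + 1 - β - 2 * ℓ)]
    have hkQ : (α:ℚ) + 3 ≤ β + 2 * ℓ := by exact_mod_cast hkey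
    have ht : (0:ℚ) ≤ 2 * ℓ + β - α - 2 := by linarith
    nlinarith [mul_nonneg ht (by linarith : (0:ℚ) ≤ (α:ℚ) - β),
      mul_nonneg ht (by linarith : (0:ℚ) ≤ (γ:ℚ) - 1),
      mul_nonneg ht (by linarith : (0:ℚ) ≤ 2 * (γ:ℚ) + 2 - β),
      sq_nonneg (2 * (ℓ:ℚ) + β - α - 2)]
  · -- case 5 : Odd, 2β ≤ α+4γ+6, 2γ+3 ≤ β
    obtain ⟨hodd, h2b, hgb⟩ := h5
    have h2bQ : 2 * (β:ℚ) ≤ α + 4 * γ + 6 := by exact_mod_cast h2b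
    have hgbQ : 2 * (γ:ℚ) + 3 ≤ β := by exact_mod_cast hgb
    have hkey : α + 3 ≤ β + 2 * ℓ := by
      by_contra hn
      obtain ⟨k, hk⟩ := hodd
      have hbad : β + 2 * ℓ ≤ α + 1 := by omega
      have hbadQ : (β:ℚ) + 2 * ℓ ≤ α + 1 := by exact_mod_cast hbad
      nlinarith [hcond, mul_nonneg (by linarith : (0:ℚ) ≤ (β:ℚ) - 1)
        (by linarith : (0:ℚ) ≤ (α:ℚ) + 1 - β - 2 * ℓ)]
    have hkQ : (α:ℚ) + 3 ≤ β + 2 * ℓ := by exact_mod_cast hkey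
    have ht1 : (1:ℚ) ≤ 2 * ℓ + β - α - 2 := by linarith
    nlinarith [sq_nonneg (2 * (2 * (ℓ:ℚ) + β - α - 2) - 3),
      mul_nonneg (by linarith : (0:ℚ) ≤ 2 * (ℓ:ℚ) + β - α - 2 - 1)
        (by linarith : (0:ℚ) ≤ (α:ℚ) + 4 * γ + 6 - 2 * β), habQ, hcQ, hgbQ]
  · -- case 6 : α % 4 = 0, α+4γ+6 < 2β
    obtain ⟨-, h2b⟩ := h6
    have h2bQ : (α:ℚ) + 4 * γ + 7 ≤ 2 * β := by
      have : α + 4 * γ + 7 ≤ 2 * β := by omega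
      exact_mod_cast this
    have hkey : α + 2 ≤ β + 2 * ℓ := by
      by_contra hn
      have hbad : β + 2 * ℓ ≤ α + 1 := by omega
      have hbadQ : (β:ℚ) + 2 * ℓ ≤ α + 1 := by exact_mod_cast hbad
      nlinarith [hcond, mul_nonneg (by linarith : (0:ℚ) ≤ (β:ℚ) - 1)
        (by linarith : (0:ℚ) ≤ (α:ℚ) + 1 - β - 2 * ℓ), sq_nonneg ((α:ℚ) - 2 * β + 4 * γ)]
    have hkQ : (α:ℚ) + 2 ≤ β + 2 * ℓ := by exact_mod_cast hkey
    have ht : (0:ℚ) ≤ 2 * ℓ + β - α - 2 := by linarith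
    nlinarith [sq_nonneg (4 * (ℓ:ℚ) - α + 4 * γ - 1), habQ, hcQ, h2bQ]
  · -- case 7 : Odd α, α+4γ+6 < 2β
    obtain ⟨-, h2b⟩ := h7
    have h2bQ : (α:ℚ) + 4 * γ + 7 ≤ 2 * β := by
      have : α + 4 * γ + 7 ≤ 2 * β := by omega
      exact_mod_cast this
    have hkey : α + 2 ≤ β + 2 * ℓ := by
      by_contra hn
      have hbad : β + 2 * ℓ ≤ α + 1 := by omega
      have hbadQ : (β:ℚ) + 2 * ℓ ≤ α + 1 := by exact_mod_cast hbad
      nlinarith [hcond, mul_nonneg (by linarith : (0:ℚ) ≤ (β:ℚ) - 1)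
        (by linarith : (0:ℚ) ≤ (α:ℚ) + 1 - β - 2 * ℓ), sq_nonneg ((α:ℚ) - 2 * β + 4 * γ)]
    have hkQ : (α:ℚ) + 2 ≤ β + 2 * ℓ := by exact_mod_cast hkey
    have ht : (0:ℚ) ≤ 2 * ℓ + β - α - 2 := by linarith
    nlinarith [sq_nonneg (4 * (ℓ:ℚ) - α + 4 * γ - 1), habQ, hcQ, h2bQ]
  · -- case 8 : α % 4 = 2, α+4γ+6 < 2β
    obtain ⟨-, h2b⟩ := h8
    have h2bQ : (α:ℚ) + 4 * γ + 7 ≤ 2 * β := by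
      have : α + 4 * γ + 7 ≤ 2 * β := by omega
      exact_mod_cast this
    have hkey : α + 2 ≤ β + 2 * ℓ := by
      by_contra hn
      have hbad : β + 2 * ℓ ≤ α + 1 := by omega
      have hbadQ : (β:ℚ) + 2 * ℓ ≤ α + 1 := by exact_mod_cast hbad
      nlinarith [hcond, mul_nonneg (by linarith : (0:ℚ) ≤ (β:ℚ) - 1)
        (by linarith : (0:ℚ) ≤ (α:ℚ) + 1 - β - 2 * ℓ), sq_nonneg ((α:ℚ) - 2 * β + 4 * γ)]
    have hkQ : (α:ℚ) + 2 ≤ β + 2 * ℓ := by exact_mod_cast hkey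
    have ht : (0:ℚ) ≤ 2 * ℓ + β - α - 2 := by linarith
    nlinarith [sq_nonneg (4 * (ℓ:ℚ) - α + 4 * γ - 1), habQ, hcQ, h2bQ]
  · -- impossible case
    exfalso
    simp only [Nat.even_iff, Nat.odd_iff] at h1 h2 h3 h4 h5 h6 h7 h8
    omega
end

section
/- For all integers α ≥ β ≥ 4, γ ≥ 1, and ℓ ≥ 2 such that ℓ ≥ F(α, β, γ) − (2γ + 1 + (β − 4)·(2γ + ℓ) + 2·(γ + ℓ)), the savings function satisfies F(α, β, γ) ≥ (α − 2ℓ + 1)·(2γ + ℓ) + ℓ. -/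
private lemma case1_lem (a b c l : ℚ) (hb : 4 ≤ b) (hc : 1 ≤ c) (hl : 2 ≤ l)
    (h1 : b ≤ c+1) (h2 : b+2 ≤ a) (hs : a-b+4 ≤ 2*l) :
    (a-2*l+1)*(2*c+l)+l ≤ 2*b*c + a*b/2 - b^2/2 + b/2 - a/2 - 2*c + 2 := by
  nlinarith [mul_nonneg (by linarith : (0:ℚ) ≤ 2*l-(a-b+4)) (by linarith : (0:ℚ) ≤ l-2),
    mul_nonneg (by linarith : (0:ℚ) ≤ 2*l-(a-b+4)) (by linarith : (0:ℚ) ≤ c-1),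
    mul_nonneg (by linarith : (0:ℚ) ≤ 2*l-(a-b+4)) (by linarith : (0:ℚ) ≤ b-4),
    mul_nonneg (by linarith : (0:ℚ) ≤ c+1-b) (by linarith : (0:ℚ) ≤ l-2),
    mul_nonneg (by linarith : (0:ℚ) ≤ a-b-2) (by linarith : (0:ℚ) ≤ l-2),
    sq_nonneg (2*l-(a-b+4)), sq_nonneg (l-2)]

private lemma case2_lem (a b c l : ℚ) (hb : 4 ≤ b) (hba : b ≤ a) (hc : 1 ≤ c) (hl : 2 ≤ l)
    (h1 : 3*b ≤ a+6*c+6) (hs : a-b+4 ≤ 2*l) :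
    (a-2*l+1)*(2*c+l)+l ≤ 2*b*c + a*b/2 - b^2/2 + 3*b/2 - a/2 - 3*c := by
  nlinarith [mul_nonneg (by linarith : (0:ℚ) ≤ 2*l-(a-b+4)) (by linarith : (0:ℚ) ≤ l-2),
    mul_nonneg (by linarith : (0:ℚ) ≤ 2*l-(a-b+4)) (by linarith : (0:ℚ) ≤ c-1),
    mul_nonneg (by linarith : (0:ℚ) ≤ 2*l-(a-b+4)) (by linarith : (0:ℚ) ≤ b-4),
    mul_nonneg (by linarith : (0:ℚ) ≤ a+6*c+6-3*b) (by linarith : (0:ℚ) ≤ l-2),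
    mul_nonneg (by linarith : (0:ℚ) ≤ a-b) (by linarith : (0:ℚ) ≤ l-2),
    mul_nonneg (by linarith : (0:ℚ) ≤ a+6*c+6-3*b) (by linarith : (0:ℚ) ≤ c-1),
    sq_nonneg (2*l-(a-b+4)), sq_nonneg (l-2)]

private lemma case3_lem (a b c l : ℚ) (hb : 4 ≤ b) (hba : b ≤ a) (hc : 1 ≤ c) (hl : 2 ≤ l)
    (h1 : 2*b ≤ a+4*c+6) (h2 : a+6*c+8 ≤ 3*b) (hs : a-b+4 ≤ 2*l) :
    (a-2*l+1)*(2*c+l)+l ≤ 2*b*c + a*b/2 - b^2/2 + 3*b - a - 6*c - 4 := by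
  nlinarith [mul_nonneg (by linarith : (0:ℚ) ≤ 2*l-(a-b+4)) (by linarith : (0:ℚ) ≤ l-2),
    mul_nonneg (by linarith : (0:ℚ) ≤ 2*l-(a-b+4)) (by linarith : (0:ℚ) ≤ c-1),
    mul_nonneg (by linarith : (0:ℚ) ≤ 2*l-(a-b+4)) (by linarith : (0:ℚ) ≤ b-4),
    mul_nonneg (by linarith : (0:ℚ) ≤ a+4*c+6-2*b) (by linarith : (0:ℚ) ≤ l-2),
    mul_nonneg (by linarith : (0:ℚ) ≤ 3*b-a-6*c-8) (by linarith : (0:ℚ) ≤ l-2),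
    mul_nonneg (by linarith : (0:ℚ) ≤ a+4*c+6-2*b) (by linarith : (0:ℚ) ≤ 3*b-a-6*c-8),
    sq_nonneg (2*l-(a-b+4)), sq_nonneg (l-2)]

private lemma case4_lem (a b c l : ℚ) (hb : 4 ≤ b) (hc : 1 ≤ c) (hl : 2 ≤ l)
    (h1 : b ≤ 2*c+2) (h2 : b+1 ≤ a) (hs : a-b+3 ≤ 2*l) :
    (a-2*l+1)*(2*c+l)+l ≤ 2*b*c + a*b/2 - b^2/2 + b - a/2 - 2*c + 3/2 := by
  nlinarith [mul_nonneg (by linarith : (0:ℚ) ≤ 2*l-(a-b+3)) (by linarith : (0:ℚ) ≤ l-2),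
    mul_nonneg (by linarith : (0:ℚ) ≤ 2*l-(a-b+3)) (by linarith : (0:ℚ) ≤ c-1),
    mul_nonneg (by linarith : (0:ℚ) ≤ 2*l-(a-b+3)) (by linarith : (0:ℚ) ≤ b-4),
    mul_nonneg (by linarith : (0:ℚ) ≤ 2*c+2-b) (by linarith : (0:ℚ) ≤ l-2),
    mul_nonneg (by linarith : (0:ℚ) ≤ a-b-1) (by linarith : (0:ℚ) ≤ l-2),
    sq_nonneg (2*l-(a-b+3)), sq_nonneg (l-2)]

private lemma case5a_lem (a b c l : ℚ) (hb : 4 ≤ b) (hba : b ≤ a) (hc : 1 ≤ c) (hl : 2 ≤ l)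
    (h1 : 2*b ≤ a+4*c+6) (h2 : 2*c+3 ≤ b) (hs : a-b+5 ≤ 2*l) :
    (a-2*l+1)*(2*c+l)+l ≤ 2*b*c + a*b/2 - b^2/2 + 2*b - a/2 - 4*c - 3/2 := by
  nlinarith [mul_nonneg (by linarith : (0:ℚ) ≤ 2*l-(a-b+5)) (by linarith : (0:ℚ) ≤ l-2),
    mul_nonneg (by linarith : (0:ℚ) ≤ 2*l-(a-b+5)) (by linarith : (0:ℚ) ≤ c-1),
    mul_nonneg (by linarith : (0:ℚ) ≤ 2*l-(a-b+5)) (by linarith : (0:ℚ) ≤ b-4),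
    mul_nonneg (by linarith : (0:ℚ) ≤ a+4*c+6-2*b) (by linarith : (0:ℚ) ≤ l-2),
    mul_nonneg (by linarith : (0:ℚ) ≤ b-2*c-3) (by linarith : (0:ℚ) ≤ l-2),
    mul_nonneg (by linarith : (0:ℚ) ≤ a+4*c+6-2*b) (by linarith : (0:ℚ) ≤ b-2*c-3),
    sq_nonneg (2*l-(a-b+5)), sq_nonneg (l-2)]

private lemma case5b_lem (a b c l : ℚ) (hb : 4 ≤ b) (hba : b ≤ a) (hc : 1 ≤ c) (hl : 2 ≤ l)
    (h1 : 2*b ≤ a+4*c+6) (h2 : 2*c+3 ≤ b) (hs : 2*l = a-b+3)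
    (H : 2*b*c + a*b/2 - b^2/2 + 2*b - a/2 - 4*c - 3/2
      - (2*c + 1 + (b-4)*(2*c+l) + 2*(c+l)) ≤ l) :
    (a-2*l+1)*(2*c+l)+l ≤ 2*b*c + a*b/2 - b^2/2 + 2*b - a/2 - 4*c - 3/2 := by
  nlinarith [H, mul_nonneg (by linarith : (0:ℚ) ≤ a+4*c+6-2*b) (by linarith : (0:ℚ) ≤ b-2*c-3),
    mul_nonneg (by linarith : (0:ℚ) ≤ a+4*c+6-2*b) (by linarith : (0:ℚ) ≤ c-1),
    mul_nonneg (by linarith : (0:ℚ) ≤ b-2*c-3) (by linarith : (0:ℚ) ≤ c-1),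
    sq_nonneg (a+4*c+6-2*b), sq_nonneg (b-2*c-3)]

set_option maxHeartbeats 1600000 in
/-- For all integers `α ≥ β ≥ 4`, `γ ≥ 1`, and `ℓ ≥ 2` such that
`ℓ ≥ F(α, β, γ) − (2γ + 1 + (β − 4)·(2γ + ℓ) + 2·(γ + ℓ))` (an inequality of
rationals), one has `F(α, β, γ) ≥ (α − 2ℓ + 1)·(2γ + ℓ) + ℓ`. -/
theorem stmt_19 (α β γ ℓ : ℕ) (hβ : 4 ≤ β) (hβα : β ≤ α) (hγ : 1 ≤ γ) (hℓ : 2 ≤ ℓ)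
    (hcond : F α β γ - (2 * (γ : ℚ) + 1 + ((β : ℚ) - 4) * (2 * (γ : ℚ) + (ℓ : ℚ))
        + 2 * ((γ : ℚ) + (ℓ : ℚ))) ≤ (ℓ : ℚ)) :
    ((α : ℚ) - 2 * (ℓ : ℚ) + 1) * (2 * (γ : ℚ) + (ℓ : ℚ)) + (ℓ : ℚ) ≤ F α β γ := by
  have hb : (4:ℚ) ≤ (β:ℚ) := by exact_mod_cast hβ
  have hba : (β:ℚ) ≤ (α:ℚ) := by exact_mod_cast hβα
  have hc : (1:ℚ) ≤ (γ:ℚ) := by exact_mod_cast hγ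
  have hl : (2:ℚ) ≤ (ℓ:ℚ) := by exact_mod_cast hℓ
  have hbpos : (0:ℚ) < (β:ℚ) - 1 := by linarith
  unfold F at hcond ⊢
  simp only at hcond ⊢
  split_ifs at hcond ⊢ with h1 h2 h3 h4 h5 h6 h7 h8
  · -- case 1
    obtain ⟨hev, hlt, hsm⟩ := h1
    have hpar : (α + β) % 2 = 0 := (Nat.even_iff).mp hev
    have h1' : (β:ℚ) ≤ (γ:ℚ) + 1 := by exact_mod_cast (by omega : β ≤ γ + 1)
    have h2' : (β:ℚ) + 2 ≤ (α:ℚ) := by exact_mod_cast (by omega : β + 2 ≤ α)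
    have key : (((α:ℚ)-β)/2+1)*((β:ℚ)-1) < (ℓ:ℚ)*((β:ℚ)-1) := by nlinarith [hcond]
    have hlq : ((α:ℚ)-β)/2+1 < (ℓ:ℚ) := lt_of_mul_lt_mul_right key (le_of_lt hbpos)
    have hZ : (α:ℤ) - β + 2 < 2 * ℓ := by
      rw [← @Int.cast_lt ℚ]; push_cast; linarith
    have hZ4 : (α:ℤ) - β + 4 ≤ 2 * ℓ := by omega
    have hs : (α:ℚ) - β + 4 ≤ 2*(ℓ:ℚ) := by
      exact_mod_cast hZ4
    exact case1_lem _ _ _ _ hb hc hl h1' h2' hs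
  · -- case 2
    obtain ⟨hev, hlt, _⟩ := h2
    have hpar : (α + β) % 2 = 0 := (Nat.even_iff).mp hev
    have h1' : 3*(β:ℚ) ≤ (α:ℚ) + 6*γ + 6 := by exact_mod_cast (by omega : 3*β ≤ α + 6*γ + 6)
    have key : (((α:ℚ)-β)/2+1)*((β:ℚ)-1) < (ℓ:ℚ)*((β:ℚ)-1) := by nlinarith [hcond]
    have hlq : ((α:ℚ)-β)/2+1 < (ℓ:ℚ) := lt_of_mul_lt_mul_right key (le_of_lt hbpos)
    have hZ : (α:ℤ) - β + 2 < 2 * ℓ := by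
      rw [← @Int.cast_lt ℚ]; push_cast; linarith
    have hZ4 : (α:ℤ) - β + 4 ≤ 2 * ℓ := by omega
    have hs : (α:ℚ) - β + 4 ≤ 2*(ℓ:ℚ) := by
      exact_mod_cast hZ4
    exact case2_lem _ _ _ _ hb hba hc hl h1' hs
  · -- case 3
    obtain ⟨hev, hle, hge⟩ := h3
    have hpar : (α + β) % 2 = 0 := (Nat.even_iff).mp hev
    have h1' : 2*(β:ℚ) ≤ (α:ℚ) + 4*γ + 6 := by exact_mod_cast hle
    have h2' : (α:ℚ) + 6*γ + 8 ≤ 3*(β:ℚ) := by exact_mod_cast hge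
    have key : (((α:ℚ)-β)/2+1)*((β:ℚ)-1) < (ℓ:ℚ)*((β:ℚ)-1) := by nlinarith [hcond]
    have hlq : ((α:ℚ)-β)/2+1 < (ℓ:ℚ) := lt_of_mul_lt_mul_right key (le_of_lt hbpos)
    have hZ : (α:ℤ) - β + 2 < 2 * ℓ := by
      rw [← @Int.cast_lt ℚ]; push_cast; linarith
    have hZ4 : (α:ℤ) - β + 4 ≤ 2 * ℓ := by omega
    have hs : (α:ℚ) - β + 4 ≤ 2*(ℓ:ℚ) := by
      exact_mod_cast hZ4
    exact case3_lem _ _ _ _ hb hba hc hl h1' h2' hs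
  · -- case 4
    obtain ⟨hod, hlt⟩ := h4
    have hpar : (α + β) % 2 = 1 := (Nat.odd_iff).mp hod
    have h1' : (β:ℚ) ≤ 2*(γ:ℚ) + 2 := by exact_mod_cast (by omega : β ≤ 2*γ + 2)
    have h2' : (β:ℚ) + 1 ≤ (α:ℚ) := by exact_mod_cast (by omega : β + 1 ≤ α)
    have key : (((α:ℚ)-β+1)/2)*((β:ℚ)-1) < (ℓ:ℚ)*((β:ℚ)-1) := by nlinarith [hcond]
    have hlq : ((α:ℚ)-β+1)/2 < (ℓ:ℚ) := lt_of_mul_lt_mul_right key (le_of_lt hbpos)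
    have hZ : (α:ℤ) - β + 1 < 2 * ℓ := by
      rw [← @Int.cast_lt ℚ]; push_cast; linarith
    have hZ3 : (α:ℤ) - β + 3 ≤ 2 * ℓ := by omega
    have hs : (α:ℚ) - β + 3 ≤ 2*(ℓ:ℚ) := by
      exact_mod_cast hZ3
    exact case4_lem _ _ _ _ hb hc hl h1' h2' hs
  · -- case 5
    obtain ⟨hod, hle, hge⟩ := h5
    have hpar : (α + β) % 2 = 1 := (Nat.odd_iff).mp hod
    have h1' : 2*(β:ℚ) ≤ (α:ℚ) + 4*γ + 6 := by exact_mod_cast hle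
    have h2' : 2*(γ:ℚ) + 3 ≤ (β:ℚ) := by exact_mod_cast hge
    have key : (((α:ℚ)-β+1)/2)*((β:ℚ)-1) < (ℓ:ℚ)*((β:ℚ)-1) := by nlinarith [hcond]
    have hlq : ((α:ℚ)-β+1)/2 < (ℓ:ℚ) := lt_of_mul_lt_mul_right key (le_of_lt hbpos)
    have hZ : (α:ℤ) - β + 1 < 2 * ℓ := by
      rw [← @Int.cast_lt ℚ]; push_cast; linarith
    have hZ3 : (α:ℤ) - β + 3 ≤ 2 * ℓ := by omega
    rcases (by omega : 2*(ℓ:ℤ) = (α:ℤ) - β + 3 ∨ (α:ℤ) - β + 5 ≤ 2*ℓ) with heq | hge5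
    · have hs : 2*(ℓ:ℚ) = (α:ℚ) - β + 3 := by exact_mod_cast heq
      exact case5b_lem _ _ _ _ hb hba hc hl h1' h2' hs hcond
    · have hs : (α:ℚ) - β + 5 ≤ 2*(ℓ:ℚ) := by exact_mod_cast hge5
      exact case5a_lem _ _ _ _ hb hba hc hl h1' h2' hs
  · -- case 6 : α % 4 = 0
    obtain ⟨hm4, _⟩ := h6
    have hd2 : (4:ℤ) ≤ ((α:ℤ) + 2 - 4*γ - 4*ℓ)^2 := by
      rcases (by omega : (α:ℤ) + 2 - 4*γ - 4*ℓ ≤ -2 ∨ 2 ≤ (α:ℤ) + 2 - 4*γ - 4*ℓ) with h | h <;>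
        nlinarith
    have hd2q : (4:ℚ) ≤ ((α:ℚ) + 2 - 4*γ - 4*ℓ)^2 := by
      have h0 : (4:ℚ) ≤ (((α:ℤ) + 2 - 4*γ - 4*ℓ : ℤ):ℚ)^2 := by exact_mod_cast hd2
      push_cast at h0; convert h0 using 2 <;> push_cast <;> ring
    nlinarith [hd2q]
  · -- case 7 : α odd
    obtain ⟨hod, _⟩ := h7
    have hao : α % 2 = 1 := Nat.odd_iff.mp hod
    have hd2 : (1:ℤ) ≤ ((α:ℤ) + 2 - 4*γ - 4*ℓ)^2 := by
      rcases (by omega : (α:ℤ) + 2 - 4*γ - 4*ℓ ≤ -1 ∨ 1 ≤ (α:ℤ) + 2 - 4*γ - 4*ℓ) with h | h <;>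
        nlinarith
    have hd2q : (1:ℚ) ≤ ((α:ℚ) + 2 - 4*γ - 4*ℓ)^2 := by
      have h0 : (1:ℚ) ≤ (((α:ℤ) + 2 - 4*γ - 4*ℓ : ℤ):ℚ)^2 := by exact_mod_cast hd2
      push_cast at h0; convert h0 using 2 <;> push_cast <;> ring
    nlinarith [hd2q]
  · -- case 8 : α % 4 = 2
    nlinarith [sq_nonneg ((α:ℚ) + 2 - 4*γ - 4*ℓ)]
  · -- impossible
    exfalso
    rw [Nat.even_iff] at h1 h2 h3
    rw [Nat.odd_iff] at h4 h5 h7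
    push_neg at h1 h2 h3 h4 h5 h6 h7 h8
    omega
end
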